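/- arXiv:1909.05786 — 13 statements merged into one kernel-verified Lean document; each statement's English description precedes it below -/
import Mathlib

section
/- Let V be an integrable function on [0,1] and let y be the solution of the initial value problem -y'' + V y = 0, y(0) = 0, y'(0) = 1. If V is non-negative almost everywhere, then y(t) ≥ t for all t in [0,1]; in particular y is positive on (0,1]. -/
/-!
Since `y'' = V y` with `V ≥ 0`, the slope `y'` keeps increasing from its initial value `1` as long
as `y` stays nonnegative, so on any initial interval where `y ≥ 0` we get `y t ≥ t`. As `y'(0) = 1`,
`y` is positive just to the right of `0`; at a first point `t₀ > 0` with `y t₀ ≤ 0` the function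
would be nonnegative on `[0, t₀)` and hence satisfy `y t₀ ≥ t₀ > 0`, a contradiction.
-/

open MeasureTheory Set intervalIntegral Filter Topology

theorem HasDerivWithinAt.eventually_lt_of_deriv_pos {f : ℝ → ℝ} {f' a : ℝ}
    (hf : HasDerivWithinAt f f' (Ioi a) a) (hf' : 0 < f') : ∀ᶠ x in 𝓝[>] a, f a < f x := by
  have hslope := (hasDerivWithinAt_iff_tendsto_slope' self_notMem_Ioi).1 hf
  filter_upwards [hslope.eventually (eventually_gt_nhds hf'), self_mem_nhdsWithin] with x hx hax
  exact (slope_pos_iff_of_le (le_of_lt hax)).1 hx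

theorem sub_le_sub_of_hasDerivWithinAt_one_add_integral {f g : ℝ → ℝ} {a b : ℝ}
    (hf : ∀ t ∈ Icc a b, HasDerivWithinAt f (1 + ∫ s in a..t, g s) (Icc a b) t)
    (hg : ∀ᵐ s ∂volume.restrict (Ioo a b), 0 ≤ g s) {t : ℝ} (ht : t ∈ Icc a b) :
    t - a ≤ f t - f a := by
  have hmono : MonotoneOn (fun t => f t - t) (Icc a b) := by
    refine monotoneOn_of_hasDerivWithinAt_nonneg (f' := fun x => ∫ s in a..x, g s)
      (convex_Icc a b) (ContinuousOn.sub (fun t ht => (hf t ht).continuousWithinAt) continuousOn_id)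
      (fun x hx => ?_) (fun x hx => ?_) <;> simp only [interior_Icc] at hx ⊢
    · exact (((hf x (Ioo_subset_Icc_self hx)).mono Ioo_subset_Icc_self).sub
        (hasDerivWithinAt_id x _)).congr_deriv (add_sub_cancel_left _ _)
    · rw [integral_of_le hx.1.le]
      exact setIntegral_nonneg_of_ae_restrict
        (ae_restrict_of_ae_restrict_of_subset (Ioc_subset_Ioo_right hx.2) hg)
  have := hmono (left_mem_Icc.2 (ht.1.trans ht.2)) ht ht.1
  linarith

theorem self_le_solution_of_nonneg_on_Ioo {V y : ℝ → ℝ} {c : ℝ}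
    (hVpos : ∀ᵐ t ∂(volume.restrict (Icc (0:ℝ) 1)), 0 ≤ V t) (hy0 : y 0 = 0)
    (hy : ∀ t ∈ Icc (0:ℝ) 1,
      HasDerivWithinAt y (1 + ∫ s in (0:ℝ)..t, V s * y s) (Icc (0:ℝ) 1) t)
    (hc : c ≤ 1) (hpos : ∀ u ∈ Ioo 0 c, 0 ≤ y u) {t : ℝ} (ht : t ∈ Icc 0 c) : t ≤ y t := by
  have hsub : Icc 0 c ⊆ Icc (0:ℝ) 1 := Icc_subset_Icc_right hc
  have hVy : ∀ᵐ s ∂volume.restrict (Ioo 0 c), 0 ≤ V s * y s := by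
    filter_upwards [ae_restrict_of_ae_restrict_of_subset (Ioo_subset_Icc_self.trans hsub) hVpos,
      ae_restrict_mem measurableSet_Ioo] with s hVs hs
    exact mul_nonneg hVs (hpos s hs)
  have := sub_le_sub_of_hasDerivWithinAt_one_add_integral
    (fun t ht => (hy t (hsub ht)).mono hsub) hVy ht
  rwa [hy0, sub_zero, sub_zero] at this

theorem solution_pos_of_mem_Ioc {V y : ℝ → ℝ}
    (hVpos : ∀ᵐ t ∂(volume.restrict (Icc (0:ℝ) 1)), 0 ≤ V t) (hy0 : y 0 = 0)
    (hy : ∀ t ∈ Icc (0:ℝ) 1,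
      HasDerivWithinAt y (1 + ∫ s in (0:ℝ)..t, V s * y s) (Icc (0:ℝ) 1) t)
    {t : ℝ} (ht : t ∈ Ioc (0:ℝ) 1) : 0 < y t := by
  have hcont : ContinuousOn y (Icc 0 1) := fun t ht => (hy t ht).continuousWithinAt
  have hy'0 : HasDerivWithinAt y 1 (Ioi 0) 0 := by
    simpa using (hy 0 ⟨le_rfl, zero_le_one⟩).mono_of_mem_nhdsWithin
      (mem_of_superset (Ioo_mem_nhdsGT zero_lt_one) Ioo_subset_Icc_self)
  obtain ⟨δ, hδ, hnear⟩ :=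
    (nhdsGT_basis (0:ℝ)).eventually_iff.1 (hy'0.eventually_lt_of_deriv_pos one_pos)
  have hδ_le : ∀ u, 0 < u → y u ≤ 0 → δ ≤ u := fun u hu hyu =>
    le_of_not_gt fun huδ => (hy0 ▸ hnear ⟨hu, huδ⟩ : 0 < y u).not_ge hyu
  by_contra! hneg
  obtain ⟨t₀, ⟨ht₀, hyt₀⟩, ht₀_least⟩ : ∃ t₀, IsLeast (Icc δ 1 ∩ y ⁻¹' Iic 0) t₀ :=
    (isCompact_Icc.of_isClosed_subset
      ((hcont.mono (Icc_subset_Icc_left hδ.le)).preimage_isClosed_of_isClosed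
        isClosed_Icc isClosed_Iic) inter_subset_left).exists_isLeast
      ⟨t, ⟨hδ_le t ht.1 hneg, ht.2⟩, hneg⟩
  have hpos : ∀ u ∈ Ioo 0 t₀, 0 ≤ y u := fun u hu => le_of_not_gt fun hyu =>
    (ht₀_least ⟨⟨hδ_le u hu.1 hyu.le, hu.2.le.trans ht₀.2⟩, hyu.le⟩).not_gt hu.2
  have ht₀_le : t₀ ≤ y t₀ :=
    self_le_solution_of_nonneg_on_Ioo hVpos hy0 hy ht₀.2 hpos ⟨hδ.le.trans ht₀.1, le_rfl⟩
  linarith [ht₀.1, show y t₀ ≤ 0 from hyt₀]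

theorem positivity_of_solution_nonneg_potential_general
    (V y : ℝ → ℝ)
    (hVpos : ∀ᵐ t ∂(volume.restrict (Icc (0:ℝ) 1)), 0 ≤ V t)
    (hy0 : y 0 = 0)
    (hy : ∀ t ∈ Icc (0:ℝ) 1,
      HasDerivWithinAt y (1 + ∫ s in (0:ℝ)..t, V s * y s) (Icc (0:ℝ) 1) t) :
    ∀ t ∈ Icc (0:ℝ) 1, t ≤ y t ∧ (0 < t → 0 < y t) := by
  intro t ht
  have hle : t ≤ y t := self_le_solution_of_nonneg_on_Ioo hVpos hy0 hy le_rfl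
    (fun u hu => (solution_pos_of_mem_Ioc hVpos hy0 hy ⟨hu.1, hu.2.le⟩).le) ht
  exact ⟨hle, fun htpos => htpos.trans_le hle⟩

theorem positivity_of_solution_nonneg_potential
    (V y : ℝ → ℝ)
    (hV : IntegrableOn V (Icc 0 1))
    (hVpos : ∀ᵐ t ∂(volume.restrict (Icc (0:ℝ) 1)), 0 ≤ V t)
    (hy0 : y 0 = 0)
    (hy : ∀ t ∈ Icc (0:ℝ) 1,
      HasDerivWithinAt y (1 + ∫ s in (0:ℝ)..t, V s * y s) (Icc (0:ℝ) 1) t) :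
    ∀ t ∈ Icc (0:ℝ) 1, t ≤ y t ∧ (0 < t → 0 < y t) :=
  positivity_of_solution_nonneg_potential_general V y hVpos hy0 hy
end

section
/- Let V ∈ L¹[0,T] and let u, v be the solutions of -u'' + |V| u = 0, u(0)=0, u'(0)=1 and -v'' + V v = 0, v(0)=0, v'(0)=1, respectively. Then u(t) ≥ v(t) for all t ∈ [0,T]. -/
/-!
Integrating the equations twice, `ψ = (|v| - u)⁺` satisfies `ψ t ≤ T ∫₀ᵗ |V| ψ`, since
`|v'| ≤ 1 + ∫ |V| |v|` while `u' = 1 + ∫ |V| u`. A Gronwall-type argument for the integrable kernel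
`T |V|` then gives `ψ = 0`: the primitive `Φ` of `T |V| ψ` is nondecreasing and dominates `ψ`, so on
any interval `[x, y]` on which `Φ x = 0` and the kernel has mass `< 1` we get `Φ y ≤ (mass) Φ y`,
i.e. `Φ y = 0`; continuous induction spreads this over `[0, T]`. Hence `v ≤ |v| ≤ u`.
-/

open MeasureTheory Set intervalIntegral Real Filter Topology

lemma continuousOn_intervalIntegral_of_integrableOn_Icc {f : ℝ → ℝ} {a b : ℝ}
    (hf : IntegrableOn f (Icc a b)) :
    ContinuousOn (fun x => ∫ t in a..x, f t) (Icc a b) :=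
  (continuousOn_primitive hf).congr fun _ hx => integral_of_le hx.1

lemma eq_add_integral_of_hasDerivWithinAt_Icc {w w' : ℝ → ℝ} {a b t : ℝ}
    (hw' : ContinuousOn w' (Icc a b))
    (hw : ∀ s ∈ Icc a b, HasDerivWithinAt w (w' s) (Icc a b) s) (ht : t ∈ Icc a b) :
    w t = w a + ∫ s in a..t, w' s := by
  have hsub : Icc a t ⊆ Icc a b := Icc_subset_Icc le_rfl ht.2
  rw [integral_eq_sub_of_hasDerivAt_of_le ht.1
    (fun s hs => (hw s (hsub hs)).continuousWithinAt.mono hsub)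
    (fun s hs => (hw s (hsub (Ioo_subset_Icc_self hs))).hasDerivAt
      (Icc_mem_nhds hs.1 (hs.2.trans_le ht.2)))
    ((hw'.mono hsub).intervalIntegrable_of_Icc ht.1)]
  ring

lemma MeasureTheory.IntegrableOn.intervalIntegrable_of_Icc_subset {f : ℝ → ℝ} {a b c d : ℝ}
    (hf : IntegrableOn f (Icc a b)) (hc : a ≤ c) (hcd : c ≤ d) (hd : d ≤ b) :
    IntervalIntegrable f volume c d :=
  (intervalIntegrable_iff_integrableOn_Icc_of_le hcd).2 (hf.mono_set (Icc_subset_Icc hc hd))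

lemma monotoneOn_intervalIntegral_of_nonneg {f : ℝ → ℝ} {a b : ℝ}
    (hf : IntegrableOn f (Icc a b)) (hf0 : ∀ t ∈ Icc a b, 0 ≤ f t) :
    MonotoneOn (fun x => ∫ t in a..x, f t) (Icc a b) := by
  intro x hx y hy hxy
  refine integral_mono_interval le_rfl hx.1 hxy ?_
    (hf.intervalIntegrable_of_Icc_subset le_rfl hy.1 hy.2)
  exact ae_restrict_of_forall_mem measurableSet_Ioc fun t ht =>
    hf0 t ⟨ht.1.le, ht.2.trans hy.2⟩

section Gronwall

variable {K ψ : ℝ → ℝ} {a b : ℝ}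

lemma intervalIntegral_mul_eq_zero_of_integral_lt_one
    (hK : IntegrableOn K (Icc a b)) (hK0 : ∀ t ∈ Icc a b, 0 ≤ K t)
    (hψ : ContinuousOn ψ (Icc a b)) (hψ0 : ∀ t ∈ Icc a b, 0 ≤ ψ t)
    (h : ∀ t ∈ Icc a b, ψ t ≤ ∫ s in a..t, K s * ψ s) {x y : ℝ}
    (hx : a ≤ x) (hxy : x ≤ y) (hy : y ≤ b) (hΦx : ∫ s in a..x, K s * ψ s = 0)
    (hKxy : ∫ s in x..y, K s < 1) :
    ∫ s in a..y, K s * ψ s = 0 := by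
  set Φ : ℝ → ℝ := fun t => ∫ s in a..t, K s * ψ s
  have hKψ : IntegrableOn (fun s => K s * ψ s) (Icc a b) := hK.mul_continuousOn hψ isCompact_Icc
  have hmono := monotoneOn_intervalIntegral_of_nonneg hKψ fun t ht =>
    mul_nonneg (hK0 t ht) (hψ0 t ht)
  have hyI : y ∈ Icc a b := ⟨hx.trans hxy, hy⟩
  have hΦy0 : 0 ≤ Φ y := hΦx ▸ hmono ⟨hx, hxy.trans hy⟩ hyI hxy
  have hsplit : Φ y = ∫ s in x..y, K s * ψ s := by
    show ∫ s in a..y, K s * ψ s = _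
    rw [← integral_add_adjacent_intervals
      (hKψ.intervalIntegrable_of_Icc_subset le_rfl hx (hxy.trans hy))
      (hKψ.intervalIntegrable_of_Icc_subset hx hxy hy), hΦx, zero_add]
  have hbound : Φ y ≤ (∫ s in x..y, K s) * Φ y := calc
    Φ y = ∫ s in x..y, K s * ψ s := hsplit
    _ ≤ ∫ s in x..y, K s * Φ y := by
      refine integral_mono_on hxy (hKψ.intervalIntegrable_of_Icc_subset hx hxy hy)
        ((hK.intervalIntegrable_of_Icc_subset hx hxy hy).mul_const _) fun r hr => ?_
      have hrI : r ∈ Icc a b := ⟨hx.trans hr.1, hr.2.trans hy⟩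
      exact mul_le_mul_of_nonneg_left ((h r hrI).trans (hmono hrI hyI hr.2)) (hK0 r hrI)
    _ = (∫ s in x..y, K s) * Φ y := intervalIntegral.integral_mul_const _ _
  nlinarith

theorem eq_zero_of_le_intervalIntegral_mul
    (hK : IntegrableOn K (Icc a b)) (hK0 : ∀ t ∈ Icc a b, 0 ≤ K t)
    (hψ : ContinuousOn ψ (Icc a b)) (hψ0 : ∀ t ∈ Icc a b, 0 ≤ ψ t)
    (h : ∀ t ∈ Icc a b, ψ t ≤ ∫ s in a..t, K s * ψ s) :
    ∀ t ∈ Icc a b, ψ t = 0 := by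
  set Φ : ℝ → ℝ := fun t => ∫ s in a..t, K s * ψ s
  suffices Icc a b ⊆ {t | Φ t = 0} from
    fun t ht => le_antisymm ((h t ht).trans_eq (this ht)) (hψ0 t ht)
  refine IsClosed.Icc_subset_of_forall_mem_nhdsWithin ?_ (integral_same (a := a)) ?_
  · rw [inter_comm]
    exact (continuousOn_intervalIntegral_of_integrableOn_Icc
      (hK.mul_continuousOn hψ isCompact_Icc)).preimage_isClosed_of_isClosed isClosed_Icc
      isClosed_singleton
  · rintro x ⟨hΦx, hx⟩
    have hKx : IntervalIntegrable K volume (min x x) (max x b) := by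
      rw [min_self, max_eq_right hx.2.le]
      exact hK.intervalIntegrable_of_Icc_subset hx.1 hx.2.le le_rfl
    have hsmall : ∀ᶠ y in 𝓝[>] x, ∫ s in x..y, K s < 1 :=
      ((continuousWithinAt_primitive (measure_singleton x) hKx).mono_of_mem_nhdsWithin
        (Icc_mem_nhdsGT hx.2)).eventually (gt_mem_nhds (by simp))
    filter_upwards [hsmall, Ioc_mem_nhdsGT hx.2] with y hKy hy
    exact intervalIntegral_mul_eq_zero_of_integral_lt_one hK hK0 hψ hψ0 h hx.1 hy.1.le hy.2
      hΦx hKy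

end Gronwall

lemma abs_intervalIntegral_sub_intervalIntegral_le {f g : ℝ → ℝ} {a b C : ℝ} (hab : a ≤ b)
    (hf : IntervalIntegrable f volume a b) (hg : IntervalIntegrable g volume a b)
    (hfg : ∀ s ∈ Icc a b, |f s| - g s ≤ C) :
    |∫ s in a..b, f s| - ∫ s in a..b, g s ≤ (b - a) * C :=
  calc |∫ s in a..b, f s| - ∫ s in a..b, g s
      ≤ (∫ s in a..b, |f s|) - ∫ s in a..b, g s := by
        gcongr; exact abs_integral_le_integral_abs hab
    _ = ∫ s in a..b, (|f s| - g s) := (integral_sub hf.abs hg).symm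
    _ ≤ ∫ _ in a..b, C := integral_mono_on hab (hf.abs.sub hg) intervalIntegrable_const hfg
    _ = (b - a) * C := by simp

lemma abs_one_add_intervalIntegral_sub_le {V u v : ℝ → ℝ} {a s : ℝ} (has : a ≤ s)
    (hV : IntegrableOn V (Icc a s)) (hu : ContinuousOn u (Icc a s))
    (hv : ContinuousOn v (Icc a s)) :
    |1 + ∫ r in a..s, V r * v r| - (1 + ∫ r in a..s, |V r| * u r)
      ≤ ∫ r in a..s, |V r| * max (|v r| - u r) 0 := by
  have hVabs : IntegrableOn (fun r => |V r|) (Icc a s) := hV.abs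
  have hii : ∀ {f : ℝ → ℝ}, IntegrableOn f (Icc a s) → IntervalIntegrable f volume a s :=
    fun hf => hf.intervalIntegrable_of_Icc_subset le_rfl has le_rfl
  have hVv := hii (hVabs.mul_continuousOn hv.abs isCompact_Icc)
  have hVu := hii (hVabs.mul_continuousOn hu isCompact_Icc)
  have habs : |∫ r in a..s, V r * v r| ≤ ∫ r in a..s, |V r| * |v r| := by
    simpa only [abs_mul] using abs_integral_le_integral_abs (f := fun r => V r * v r) has
  have hdiff : (∫ r in a..s, |V r| * |v r|) - ∫ r in a..s, |V r| * u r
      ≤ ∫ r in a..s, |V r| * max (|v r| - u r) 0 := by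
    rw [← integral_sub hVv hVu]
    refine integral_mono_on has (hVv.sub hVu)
      (hii (hVabs.mul_continuousOn (by fun_prop) isCompact_Icc)) ?_
    intro r _
    rw [← mul_sub]
    exact mul_le_mul_of_nonneg_left (le_max_left _ _) (abs_nonneg _)
  linarith [abs_add_le 1 (∫ r in a..s, V r * v r), abs_one (α := ℝ)]

lemma max_abs_sub_le_intervalIntegral {T : ℝ} {V u v : ℝ → ℝ}
    (hV : IntegrableOn V (Icc 0 T)) (hu0 : u 0 = 0)
    (hu : ∀ t ∈ Icc (0:ℝ) T,
      HasDerivWithinAt u (1 + ∫ s in (0:ℝ)..t, |V s| * u s) (Icc (0:ℝ) T) t)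
    (hv0 : v 0 = 0)
    (hv : ∀ t ∈ Icc (0:ℝ) T,
      HasDerivWithinAt v (1 + ∫ s in (0:ℝ)..t, V s * v s) (Icc (0:ℝ) T) t)
    {t : ℝ} (ht : t ∈ Icc 0 T) :
    max (|v t| - u t) 0 ≤ ∫ s in (0:ℝ)..t, T * |V s| * max (|v s| - u s) 0 := by
  have hu_c : ContinuousOn u (Icc 0 T) := fun s hs => (hu s hs).continuousWithinAt
  have hv_c : ContinuousOn v (Icc 0 T) := fun s hs => (hv s hs).continuousWithinAt
  have hVabs : IntegrableOn (fun s => |V s|) (Icc 0 T) := hV.abs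
  have hu' : ContinuousOn (fun s => 1 + ∫ r in (0:ℝ)..s, |V r| * u r) (Icc 0 T) :=
    continuousOn_const.add (continuousOn_intervalIntegral_of_integrableOn_Icc
      (hVabs.mul_continuousOn hu_c isCompact_Icc))
  have hv' : ContinuousOn (fun s => 1 + ∫ r in (0:ℝ)..s, V r * v r) (Icc 0 T) :=
    continuousOn_const.add (continuousOn_intervalIntegral_of_integrableOn_Icc
      (hV.mul_continuousOn hv_c isCompact_Icc))
  have hVψ : IntegrableOn (fun s => |V s| * max (|v s| - u s) 0) (Icc 0 T) :=
    hVabs.mul_continuousOn (by fun_prop) isCompact_Icc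
  have hVψ0 : ∀ s, 0 ≤ |V s| * max (|v s| - u s) 0 :=
    fun s => mul_nonneg (abs_nonneg _) (le_max_right _ _)
  have hΦ0 : 0 ≤ ∫ s in (0:ℝ)..t, |V s| * max (|v s| - u s) 0 :=
    integral_nonneg ht.1 fun s _ => hVψ0 s
  have hsub : Icc 0 t ⊆ Icc 0 T := Icc_subset_Icc le_rfl ht.2
  simp_rw [mul_assoc, intervalIntegral.integral_const_mul]
  refine max_le ?_ (mul_nonneg (ht.1.trans ht.2) hΦ0)
  rw [eq_add_integral_of_hasDerivWithinAt_Icc hu' hu ht,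
    eq_add_integral_of_hasDerivWithinAt_Icc hv' hv ht, hu0, hv0, zero_add, zero_add]
  calc _ ≤ (t - 0) * ∫ s in (0:ℝ)..t, |V s| * max (|v s| - u s) 0 := by
        refine abs_intervalIntegral_sub_intervalIntegral_le ht.1
          ((hv'.mono hsub).intervalIntegrable_of_Icc ht.1)
          ((hu'.mono hsub).intervalIntegrable_of_Icc ht.1) fun s hs => ?_
        have hsub' : Icc 0 s ⊆ Icc 0 T := Icc_subset_Icc le_rfl (hs.2.trans ht.2)
        exact (abs_one_add_intervalIntegral_sub_le hs.1 (hV.mono_set hsub') (hu_c.mono hsub')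
          (hv_c.mono hsub')).trans (integral_mono_interval le_rfl hs.1 hs.2
            (ae_of_all _ hVψ0)
            (hVψ.intervalIntegrable_of_Icc_subset le_rfl ht.1 ht.2))
    _ ≤ T * ∫ s in (0:ℝ)..t, |V s| * max (|v s| - u s) 0 := by
        gcongr
        linarith [ht.2]

theorem comparison_abs_potential_general
    (T : ℝ)
    (V u v : ℝ → ℝ)
    (hV : IntegrableOn V (Icc 0 T))
    (hu0 : u 0 = 0)
    (hu : ∀ t ∈ Icc (0:ℝ) T,
      HasDerivWithinAt u (1 + ∫ s in (0:ℝ)..t, |V s| * u s) (Icc (0:ℝ) T) t)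
    (hv0 : v 0 = 0)
    (hv : ∀ t ∈ Icc (0:ℝ) T,
      HasDerivWithinAt v (1 + ∫ s in (0:ℝ)..t, V s * v s) (Icc (0:ℝ) T) t) :
    ∀ t ∈ Icc (0:ℝ) T, v t ≤ u t := by
  have hu_c : ContinuousOn u (Icc 0 T) := fun t ht => (hu t ht).continuousWithinAt
  have hv_c : ContinuousOn v (Icc 0 T) := fun t ht => (hv t ht).continuousWithinAt
  have hψ : ContinuousOn (fun t => max (|v t| - u t) 0) (Icc 0 T) := by
    fun_prop
  have hψ0 := eq_zero_of_le_intervalIntegral_mul (hV.abs.const_mul T)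
    (fun t ht => mul_nonneg (ht.1.trans ht.2) (abs_nonneg _)) hψ (fun _ _ => le_max_right _ _)
    fun t ht => max_abs_sub_le_intervalIntegral hV hu0 hu hv0 hv ht
  intro t ht
  linarith [le_abs_self (v t), le_max_left (|v t| - u t) 0, hψ0 t ht]

theorem comparison_abs_potential
    (T : ℝ) (hT : 0 < T)
    (V u v : ℝ → ℝ)
    (hV : IntegrableOn V (Icc 0 T))
    (hu0 : u 0 = 0)
    (hu : ∀ t ∈ Icc (0:ℝ) T,
      HasDerivWithinAt u (1 + ∫ s in (0:ℝ)..t, |V s| * u s) (Icc (0:ℝ) T) t)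
    (hv0 : v 0 = 0)
    (hv : ∀ t ∈ Icc (0:ℝ) T,
      HasDerivWithinAt v (1 + ∫ s in (0:ℝ)..t, V s * v s) (Icc (0:ℝ) T) t) :
    ∀ t ∈ Icc (0:ℝ) T, v t ≤ u t :=
  comparison_abs_potential_general T V u v hV hu0 hu hv0 hv
end

section
/- Let V ∈ L¹[0,1] and let y solve -y'' + V y = 0 with y(0)=0, y'(0)=1. Then |y(1) - 1| ≤ Σ_{m=1}^∞ ‖V‖₁^m / (m+1)^{m+1}. -/
open MeasureTheory Set intervalIntegral Real

-- from /tmp/a.lean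
lemma amgm_aux (k : ℕ) {s t : ℝ} (hs : 0 ≤ s) (hst : s ≤ t) :
    (t - s) * s ^ k ≤ (k : ℝ) ^ k / ((k:ℝ) + 1) ^ (k + 1) * t ^ (k + 1) := by
  rcases Nat.eq_zero_or_pos k with hk | hk
  · subst hk; norm_num; linarith
  · have hkR : (0:ℝ) < k := by exact_mod_cast hk
    have hk1 : (0:ℝ) < (k:ℝ) + 1 := by linarith
    have hk1' : ((k:ℝ) + 1) ≠ 0 := ne_of_gt hk1
    have hkne : (k:ℝ) ≠ 0 := ne_of_gt hkR
    set w₁ : ℝ := 1 / ((k:ℝ)+1) with hw₁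
    set w₂ : ℝ := (k:ℝ) / ((k:ℝ)+1) with hw₂
    have hts : 0 ≤ t - s := by linarith
    have hsk : 0 ≤ s / k := by positivity
    have hAM := Real.geom_mean_le_arith_mean2_weighted
      (by positivity : (0:ℝ) ≤ w₁) (by positivity : (0:ℝ) ≤ w₂) hts hsk
      (by rw [hw₁, hw₂]; field_simp; ring)
    have hRHS : w₁ * (t - s) + w₂ * (s / k) = t / ((k:ℝ)+1) := by
      rw [hw₁, hw₂]; field_simp; ring
    rw [hRHS] at hAM
    have hpow := Real.rpow_le_rpow (by positivity) hAM (by positivity : (0:ℝ) ≤ (k:ℝ)+1)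
    have e1 : w₁ * ((k:ℝ)+1) = 1 := by rw [hw₁]; field_simp
    have e2 : w₂ * ((k:ℝ)+1) = (k:ℝ) := by rw [hw₂]; field_simp
    have hL : ((t - s) ^ w₁ * (s / k) ^ w₂) ^ ((k:ℝ)+1)
        = (t - s) * (s / k) ^ (k : ℕ) := by
      rw [Real.mul_rpow (Real.rpow_nonneg hts _) (Real.rpow_nonneg hsk _),
        ← Real.rpow_mul hts, ← Real.rpow_mul hsk, e1, e2, Real.rpow_one,
        Real.rpow_natCast]
    have hR : (t / ((k:ℝ)+1)) ^ ((k:ℝ)+1) = (t / ((k:ℝ)+1)) ^ ((k+1 : ℕ)) := by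
      rw [← Real.rpow_natCast (t / ((k:ℝ)+1)) (k+1)]; push_cast; ring_nf
    rw [hL, hR] at hpow
    have hfin := mul_le_mul_of_nonneg_right hpow (by positivity : (0:ℝ) ≤ (k:ℝ)^k)
    calc (t - s) * s ^ k = (t-s) * (s/(k:ℝ))^k * (k:ℝ)^k := by
          rw [div_pow]; field_simp
      _ ≤ (t / ((k:ℝ)+1)) ^ (k+1) * (k:ℝ)^k := hfin
      _ = (k : ℝ) ^ k / ((k:ℝ) + 1) ^ (k + 1) * t ^ (k + 1) := by
          rw [div_pow]; ring

-- from /tmp/b.lean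
lemma fubini_tri (f : ℝ → ℝ) (hf : IntegrableOn f (Icc 0 1)) {t : ℝ}
    (ht0 : 0 ≤ t) (ht1 : t ≤ 1) :
    ∫ s in (0:ℝ)..t, (∫ r in (0:ℝ)..s, f r) = ∫ s in (0:ℝ)..t, (t - s) * f s := by
  have hsub : Ioc (0:ℝ) t ⊆ Icc 0 1 := fun x hx => ⟨le_of_lt hx.1, hx.2.trans ht1⟩
  have hft : IntegrableOn f (Ioc 0 t) := hf.mono_set hsub
  set μt := volume.restrict (Ioc (0:ℝ) t) with hμt
  have hint2 : Integrable (fun z : ℝ × ℝ => f z.2) (μt.prod μt) := by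
    simpa using (integrable_const (1:ℝ) (μ := μt)).mul_prod hft
  set F : ℝ → ℝ → ℝ := fun s r => {p : ℝ × ℝ | p.2 ≤ p.1}.indicator (fun p => f p.2) (s, r)
    with hF
  have hmeas : MeasurableSet {p : ℝ × ℝ | p.2 ≤ p.1} :=
    measurableSet_le measurable_snd measurable_fst
  have hintF : Integrable (Function.uncurry F) (μt.prod μt) := by
    have : Function.uncurry F
        = {p : ℝ × ℝ | p.2 ≤ p.1}.indicator (fun p => f p.2) := by
      ext p; cases p; rfl
    rw [this]
    exact hint2.indicator hmeas
  have hswap := integral_integral_swap hintF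
  -- identify LHS
  have hLHS : (∫ s, ∫ r, F s r ∂μt ∂μt) = ∫ s in (0:ℝ)..t, (∫ r in (0:ℝ)..s, f r) := by
    rw [intervalIntegral.integral_of_le ht0]
    apply setIntegral_congr_fun measurableSet_Ioc
    intro s hs
    show (∫ r, F s r ∂μt) = ∫ r in (0:ℝ)..s, f r
    have h1 : (fun r => F s r) = (Iic s).indicator f := by
      ext r
      by_cases h : r ≤ s
      · simp [hF, Set.indicator_of_mem, h, Set.mem_setOf_eq, Set.mem_Iic]
      · simp [hF, Set.indicator_of_notMem, h, Set.mem_Iic]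
    rw [h1, hμt, MeasureTheory.integral_indicator measurableSet_Iic,
      Measure.restrict_restrict measurableSet_Iic,
      Set.Iic_inter_Ioc_of_le hs.2,
      intervalIntegral.integral_of_le hs.1.le]
  -- identify RHS
  have hRHS : (∫ r, ∫ s, F s r ∂μt ∂μt) = ∫ s in (0:ℝ)..t, (t - s) * f s := by
    rw [intervalIntegral.integral_of_le ht0]
    apply setIntegral_congr_fun measurableSet_Ioc
    intro r hr
    show (∫ s, F s r ∂μt) = (t - r) * f r
    have h1 : (fun s => F s r) = (Ici r).indicator (fun _ => f r) := by
      ext s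
      by_cases h : r ≤ s
      · simp [hF, Set.indicator_of_mem, h, Set.mem_setOf_eq, Set.mem_Ici]
      · simp [hF, Set.indicator_of_notMem, h, Set.mem_Ici]
    rw [h1, hμt, MeasureTheory.integral_indicator measurableSet_Ici,
      Measure.restrict_restrict measurableSet_Ici]
    have h2 : Ici r ∩ Ioc 0 t = Icc r t := by
      ext x
      simp only [Set.mem_inter_iff, Set.mem_Ici, Set.mem_Ioc, Set.mem_Icc]
      constructor
      · rintro ⟨h1', h2', h3'⟩
        exact ⟨h1', h3'⟩
      · rintro ⟨h1', h2'⟩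
        exact ⟨h1', lt_of_lt_of_le hr.1 h1', h2'⟩
    rw [h2, MeasureTheory.setIntegral_const,
      Real.volume_real_Icc_of_le (by linarith [hr.2] : r ≤ t), smul_eq_mul]
  rw [← hLHS, hswap, hRHS]

-- from /tmp/c.lean
noncomputable def KK (V g : ℝ → ℝ) : ℝ → ℝ := fun t => ∫ s in (0:ℝ)..t, V s * ((t - s) * g s)

lemma mulInt (V g : ℝ → ℝ) (hV : IntegrableOn V (Icc 0 1)) (hg : ContinuousOn g (Icc 0 1)) :
    IntegrableOn (fun s => V s * g s) (Icc 0 1) := by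
  obtain ⟨C, hC⟩ := isCompact_Icc.exists_bound_of_continuousOn hg
  have hgm : AEStronglyMeasurable g (volume.restrict (Icc (0:ℝ) 1)) :=
    hg.aestronglyMeasurable measurableSet_Icc
  have hb : ∀ᵐ x ∂(volume.restrict (Icc (0:ℝ) 1)), ‖g x‖ ≤ C :=
    ae_restrict_of_forall_mem measurableSet_Icc (fun x hx => hC x hx)
  have h := Integrable.bdd_mul hV hgm hb
  exact h.congr (ae_of_all _ fun x => mul_comm _ _)

lemma intInt (V g : ℝ → ℝ) (hV : IntegrableOn V (Icc 0 1)) (hg : ContinuousOn g (Icc 0 1))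
    {t : ℝ} (ht : t ∈ Icc (0:ℝ) 1) :
    IntervalIntegrable (fun s => V s * g s) volume 0 t := by
  rw [intervalIntegrable_iff, uIoc_of_le ht.1]
  exact (mulInt V g hV hg).mono_set (fun x hx => ⟨hx.1.le, hx.2.trans ht.2⟩)

lemma aV_mono (V : ℝ → ℝ) (hV : IntegrableOn V (Icc 0 1)) {s t : ℝ}
    (hs : 0 ≤ s) (hst : s ≤ t) (ht : t ≤ 1) :
    (∫ r in (0:ℝ)..s, |V r|) ≤ ∫ r in (0:ℝ)..t, |V r| := by
  have h1 : IntervalIntegrable (fun r => |V r|) volume 0 s := by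
    rw [intervalIntegrable_iff, uIoc_of_le hs]
    exact MeasureTheory.IntegrableOn.mono_set hV.abs (fun x hx => ⟨hx.1.le, hx.2.trans (hst.trans ht)⟩)
  have h2 : IntervalIntegrable (fun r => |V r|) volume s t := by
    rw [intervalIntegrable_iff, uIoc_of_le hst]
    exact MeasureTheory.IntegrableOn.mono_set hV.abs (fun x hx => ⟨hs.trans hx.1.le, hx.2.trans ht⟩)
  have := intervalIntegral.integral_add_adjacent_intervals h1 h2
  rw [← this]
  have : 0 ≤ ∫ r in s..t, |V r| :=
    intervalIntegral.integral_nonneg hst (fun x _ => abs_nonneg _)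
  linarith

lemma aV_nonneg (V : ℝ → ℝ) {s : ℝ} (hs : 0 ≤ s) : 0 ≤ ∫ r in (0:ℝ)..s, |V r| :=
  intervalIntegral.integral_nonneg hs (fun x _ => abs_nonneg _)

lemma KK_cont (V g : ℝ → ℝ) (hV : IntegrableOn V (Icc 0 1)) (hg : ContinuousOn g (Icc 0 1)) :
    ContinuousOn (KK V g) (Icc 0 1) := by
  have hc2 : ContinuousOn (fun s : ℝ => s * g s) (Icc 0 1) := continuousOn_id.mul hg
  have h1 : IntegrableOn (fun s => V s * g s) (Icc 0 1) := mulInt V g hV hg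
  have h2 : IntegrableOn (fun s => V s * (s * g s)) (Icc 0 1) :=
    mulInt V _ hV hc2
  have hA : ContinuousOn (fun x => ∫ s in (0:ℝ)..x, V s * g s) (Icc 0 1) := by
    have := intervalIntegral.continuousOn_primitive_interval
      (a := 0) (b := 1) (μ := volume) (f := fun s => V s * g s) (by rwa [uIcc_of_le zero_le_one])
    rwa [uIcc_of_le zero_le_one] at this
  have hB : ContinuousOn (fun x => ∫ s in (0:ℝ)..x, V s * (s * g s)) (Icc 0 1) := by
    have := intervalIntegral.continuousOn_primitive_interval
      (a := 0) (b := 1) (μ := volume) (f := fun s => V s * (s * g s)) (by rwa [uIcc_of_le zero_le_one])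
    rwa [uIcc_of_le zero_le_one] at this
  have heq : ∀ t ∈ Icc (0:ℝ) 1, KK V g t
      = t * (∫ s in (0:ℝ)..t, V s * g s) - ∫ s in (0:ℝ)..t, V s * (s * g s) := by
    intro t ht
    have e1 : ∀ s, V s * ((t - s) * g s) = t * (V s * g s) - V s * (s * g s) := by
      intro s; ring
    rw [KK]
    simp_rw [e1]
    rw [intervalIntegral.integral_sub ((intInt V g hV hg ht).const_mul t)
      (intInt V _ hV hc2 ht), intervalIntegral.integral_const_mul]
  exact ContinuousOn.congr ((continuousOn_id.mul hA).sub hB) heq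

-- from /tmp/d.lean
lemma absV_intInt (V : ℝ → ℝ) (hV : IntegrableOn V (Icc 0 1)) {t : ℝ} (ht : t ∈ Icc (0:ℝ) 1) :
    IntervalIntegrable (fun r => |V r|) volume 0 t := by
  rw [intervalIntegrable_iff, uIoc_of_le ht.1]
  exact MeasureTheory.IntegrableOn.mono_set hV.abs (fun x hx => ⟨hx.1.le, hx.2.trans ht.2⟩)

lemma KK_bound (V g : ℝ → ℝ) (hV : IntegrableOn V (Icc 0 1)) (hg : ContinuousOn g (Icc 0 1))
    {D : ℝ} (hD : 0 ≤ D) (k j : ℕ)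
    (hgb : ∀ s ∈ Icc (0:ℝ) 1, |g s| ≤ D * (s ^ k * (∫ r in (0:ℝ)..s, |V r|) ^ j))
    {t : ℝ} (ht : t ∈ Icc (0:ℝ) 1) :
    |KK V g t| ≤ D * ((k:ℝ)^k / ((k:ℝ)+1)^(k+1))
      * (t ^ (k+1) * (∫ r in (0:ℝ)..t, |V r|) ^ (j+1)) := by
  have hat : (0:ℝ) ≤ ∫ r in (0:ℝ)..t, |V r| := aV_nonneg V ht.1
  set c : ℝ := D * ((k:ℝ)^k / ((k:ℝ)+1)^(k+1)) * t^(k+1) * (∫ r in (0:ℝ)..t, |V r|)^j with hc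
  have hcont : ContinuousOn (fun s : ℝ => (t - s) * g s) (Icc 0 1) :=
    (continuousOn_const.sub continuousOn_id).mul hg
  have int1 : IntervalIntegrable (fun s => |V s * ((t - s) * g s)|) volume 0 t :=
    (intInt V (fun s => (t - s) * g s) hV hcont ht).abs
  have int2 : IntervalIntegrable (fun s => c * |V s|) volume 0 t :=
    (absV_intInt V hV ht).const_mul c
  have hpt : ∀ s ∈ Icc (0:ℝ) t, |V s * ((t - s) * g s)| ≤ c * |V s| := by
    intro s hs
    have hs1 : s ∈ Icc (0:ℝ) 1 := ⟨hs.1, hs.2.trans ht.2⟩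
    have hts : 0 ≤ t - s := by linarith [hs.2]
    have has : (0:ℝ) ≤ ∫ r in (0:ℝ)..s, |V r| := aV_nonneg V hs.1
    have h1 : |(t - s) * g s| ≤ c := by
      rw [abs_mul, abs_of_nonneg hts]
      calc (t - s) * |g s| ≤ (t - s) * (D * (s ^ k * (∫ r in (0:ℝ)..s, |V r|) ^ j)) :=
            mul_le_mul_of_nonneg_left (hgb s hs1) hts
        _ = D * ((t - s) * s ^ k) * (∫ r in (0:ℝ)..s, |V r|) ^ j := by ring
        _ ≤ D * ((k:ℝ)^k / ((k:ℝ)+1)^(k+1) * t^(k+1)) * (∫ r in (0:ℝ)..t, |V r|) ^ j := by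
            apply mul_le_mul
            · exact mul_le_mul_of_nonneg_left (amgm_aux k hs.1 hs.2) hD
            · exact pow_le_pow_left₀ has (aV_mono V hV hs.1 hs.2 ht.2) j
            · exact pow_nonneg has j
            · exact mul_nonneg hD (mul_nonneg (by positivity) (pow_nonneg ht.1 _))
        _ = c := by rw [hc]; ring
    calc |V s * ((t - s) * g s)| = |V s| * |(t - s) * g s| := by rw [abs_mul]
      _ ≤ |V s| * c := mul_le_mul_of_nonneg_left h1 (abs_nonneg _)
      _ = c * |V s| := mul_comm _ _
  calc |KK V g t| ≤ ∫ s in (0:ℝ)..t, |V s * ((t - s) * g s)| :=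
        intervalIntegral.abs_integral_le_integral_abs ht.1
    _ ≤ ∫ s in (0:ℝ)..t, c * |V s| := by
        apply intervalIntegral.integral_mono_on ht.1 int1 int2 hpt
    _ = c * ∫ s in (0:ℝ)..t, |V s| := intervalIntegral.integral_const_mul _ _
    _ = D * ((k:ℝ)^k / ((k:ℝ)+1)^(k+1)) * (t ^ (k+1) * (∫ r in (0:ℝ)..t, |V r|) ^ (j+1)) := by
        rw [hc]; ring

-- from /tmp/e.lean
noncomputable def iter (V g : ℝ → ℝ) : ℕ → ℝ → ℝ
  | 0 => g
  | (m+1) => KK V (iter V g m)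

lemma iter_cont (V g : ℝ → ℝ) (hV : IntegrableOn V (Icc 0 1))
    (hg : ContinuousOn g (Icc 0 1)) : ∀ m, ContinuousOn (iter V g m) (Icc 0 1) := by
  intro m
  induction m with
  | zero => exact hg
  | succ m ih => exact KK_cont V _ hV ih

lemma KK_congr (V g h : ℝ → ℝ) (heq : EqOn g h (Icc 0 1)) {t : ℝ}
    (ht : t ∈ Icc (0:ℝ) 1) : KK V g t = KK V h t := by
  apply intervalIntegral.integral_congr
  intro s hs
  rw [uIcc_of_le ht.1] at hs
  show V s * ((t - s) * g s) = V s * ((t - s) * h s)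
  rw [heq ⟨hs.1, hs.2.trans ht.2⟩]

lemma KK_add (V g h : ℝ → ℝ) (hV : IntegrableOn V (Icc 0 1))
    (hg : ContinuousOn g (Icc 0 1)) (hh : ContinuousOn h (Icc 0 1)) {t : ℝ}
    (ht : t ∈ Icc (0:ℝ) 1) :
    KK V (fun s => g s + h s) t = KK V g t + KK V h t := by
  have e : ∀ s, V s * ((t - s) * (g s + h s))
      = V s * ((t - s) * g s) + V s * ((t - s) * h s) := by intro s; ring
  rw [KK]
  simp_rw [e]
  exact intervalIntegral.integral_add
    (intInt V (fun s => (t - s) * g s) hV ((continuousOn_const.sub continuousOn_id).mul hg) ht)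
    (intInt V (fun s => (t - s) * h s) hV ((continuousOn_const.sub continuousOn_id).mul hh) ht)

lemma inteq (V y : ℝ → ℝ) (hV : IntegrableOn V (Icc 0 1)) (hy0 : y 0 = 0)
    (hy : ∀ t ∈ Icc (0:ℝ) 1,
      HasDerivWithinAt y (1 + ∫ s in (0:ℝ)..t, V s * y s) (Icc (0:ℝ) 1) t) :
    ∀ t ∈ Icc (0:ℝ) 1, y t = t + KK V y t := by
  have ycont : ContinuousOn y (Icc 0 1) := fun t ht => (hy t ht).continuousWithinAt
  have hVy : IntegrableOn (fun s => V s * y s) (Icc 0 1) := mulInt V y hV ycont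
  set F : ℝ → ℝ := fun x => 1 + ∫ s in (0:ℝ)..x, V s * y s with hF
  have hFcont : ContinuousOn F (Icc 0 1) := by
    apply continuousOn_const.add
    have := intervalIntegral.continuousOn_primitive_interval
      (a := 0) (b := 1) (μ := volume) (f := fun s => V s * y s)
      (by rwa [uIcc_of_le zero_le_one])
    rwa [uIcc_of_le zero_le_one] at this
  intro t ht
  have hftc : ∫ x in (0:ℝ)..t, F x = y t - y 0 := by
    apply intervalIntegral.integral_eq_sub_of_hasDeriv_right_of_le ht.1
      (ycont.mono (fun x hx => ⟨hx.1, hx.2.trans ht.2⟩))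
    · intro x hx
      have hx1 : x ∈ Icc (0:ℝ) 1 := ⟨hx.1.le, (hx.2.trans_le ht.2).le⟩
      apply (hy x hx1).mono_of_mem_nhdsWithin
      exact Filter.mem_of_superset
        (Ioc_mem_nhdsGT (lt_of_lt_of_le hx.2 ht.2))
        (fun z hz => ⟨hx.1.le.trans hz.1.le, hz.2⟩)
    · exact (hFcont.mono (fun x hx => by
        rw [uIcc_of_le ht.1] at hx; exact ⟨hx.1, hx.2.trans ht.2⟩)).intervalIntegrable
  rw [hy0, sub_zero] at hftc
  have hsplit : ∫ x in (0:ℝ)..t, F x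
      = t + ∫ x in (0:ℝ)..t, (∫ s in (0:ℝ)..x, V s * y s) := by
    rw [hF]
    have hint : IntervalIntegrable (fun x => ∫ s in (0:ℝ)..x, V s * y s) volume 0 t := by
      apply ContinuousOn.intervalIntegrable
      have := intervalIntegral.continuousOn_primitive_interval
        (a := 0) (b := 1) (μ := volume) (f := fun s => V s * y s)
        (by rwa [uIcc_of_le zero_le_one])
      rw [uIcc_of_le zero_le_one] at this
      exact this.mono (fun x hx => by
        rw [uIcc_of_le ht.1] at hx; exact ⟨hx.1, hx.2.trans ht.2⟩)
    rw [intervalIntegral.integral_add intervalIntegrable_const hint]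
    simp
  rw [hsplit, fubini_tri _ hVy ht.1 ht.2] at hftc
  have : ∫ s in (0:ℝ)..t, (t - s) * (V s * y s) = KK V y t := by
    apply intervalIntegral.integral_congr
    intro s _; ring
  rw [← hftc, this]

lemma identity (V y : ℝ → ℝ) (hV : IntegrableOn V (Icc 0 1))
    (ycont : ContinuousOn y (Icc 0 1))
    (heq : ∀ t ∈ Icc (0:ℝ) 1, y t = t + KK V y t) :
    ∀ M, ∀ t ∈ Icc (0:ℝ) 1,
      y t = t + (∑ m ∈ Finset.range M, iter V (fun x => x) (m+1) t) + iter V y (M+1) t := by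
  have idcont : ContinuousOn (fun x : ℝ => x) (Icc 0 1) := continuousOn_id
  have hstep : ∀ m, ∀ t ∈ Icc (0:ℝ) 1,
      iter V y (m+1) t = iter V (fun x => x) (m+1) t + iter V y (m+2) t := by
    intro m
    induction m with
    | zero =>
      intro t ht
      show KK V y t = KK V (fun x => x) t + KK V (KK V y) t
      rw [← KK_add V _ _ hV idcont (KK_cont V y hV ycont) ht]
      exact KK_congr V y _ (fun s hs => heq s hs) ht
    | succ m ih =>
      intro t ht
      show KK V (iter V y (m+1)) t = KK V (iter V (fun x => x) (m+1)) t
        + KK V (iter V y (m+2)) t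
      rw [← KK_add V _ _ hV (iter_cont V _ hV idcont (m+1)) (iter_cont V y hV ycont (m+2)) ht]
      exact KK_congr V _ _ (fun s hs => ih s hs) ht
  intro M
  induction M with
  | zero =>
    intro t ht
    simpa [iter] using heq t ht
  | succ M ih =>
    intro t ht
    rw [ih t ht, Finset.sum_range_succ, hstep M t ht]
    ring

-- from /tmp/f.lean
lemma iterP_bound (V : ℝ → ℝ) (hV : IntegrableOn V (Icc 0 1)) :
    ∀ m, ∀ t ∈ Icc (0:ℝ) 1, |iter V (fun x => x) m t|
      ≤ 1/((m:ℝ)+1)^(m+1) * (t^(m+1) * (∫ r in (0:ℝ)..t, |V r|)^m) := by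
  intro m
  induction m with
  | zero =>
    intro t ht
    simpa [iter, abs_of_nonneg ht.1] using le_refl t
  | succ m ih =>
    intro t ht
    have hD : (0:ℝ) ≤ 1/((m:ℝ)+1)^(m+1) := by positivity
    have h := KK_bound V _ hV (iter_cont V _ hV continuousOn_id m) hD (m+1) m ih ht
    refine h.trans (le_of_eq ?_)
    push_cast
    have h1 : ((m:ℝ)+1) ≠ 0 := by positivity
    have h2 : ((m:ℝ)+1+1) ≠ 0 := by positivity
    field_simp

lemma iterQ_bound (V y : ℝ → ℝ) (hV : IntegrableOn V (Icc 0 1))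
    (ycont : ContinuousOn y (Icc 0 1)) {C : ℝ} (hC0 : 0 ≤ C)
    (hC : ∀ s ∈ Icc (0:ℝ) 1, |y s| ≤ C) :
    ∀ m, ∀ t ∈ Icc (0:ℝ) 1, |iter V y m t|
      ≤ C/((m:ℝ))^m * (t^m * (∫ r in (0:ℝ)..t, |V r|)^m) := by
  intro m
  induction m with
  | zero =>
    intro t ht
    simpa [iter] using hC t ht
  | succ m ih =>
    intro t ht
    have hmm : (0:ℝ) < ((m:ℝ))^m := by
      rcases Nat.eq_zero_or_pos m with h | h
      · subst h; norm_num
      · have : (0:ℝ) < (m:ℝ) := by exact_mod_cast h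
        positivity
    have hD : (0:ℝ) ≤ C/((m:ℝ))^m := by positivity
    have h := KK_bound V _ hV (iter_cont V _ hV ycont m) hD m m ih ht
    refine h.trans (le_of_eq ?_)
    push_cast
    have h2 : ((m:ℝ)+1) ≠ 0 := by positivity
    field_simp

-- from /tmp/g.lean
theorem determinant_upper_bound
    (V y : ℝ → ℝ)
    (hV : IntegrableOn V (Icc 0 1))
    (hy0 : y 0 = 0)
    (hy : ∀ t ∈ Icc (0:ℝ) 1,
      HasDerivWithinAt y (1 + ∫ s in (0:ℝ)..t, V s * y s) (Icc (0:ℝ) 1) t) :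
    |y 1 - 1| ≤ ∑' m : ℕ,
      (∫ t in (0:ℝ)..1, |V t|) ^ (m + 1) / ((m + 2 : ℝ)) ^ (m + 2) := by
  have ycont : ContinuousOn y (Icc 0 1) := fun t ht => (hy t ht).continuousWithinAt
  set c : ℝ := ∫ t in (0:ℝ)..1, |V t| with hc
  have hc0 : 0 ≤ c := intervalIntegral.integral_nonneg zero_le_one (fun x _ => abs_nonneg _)
  obtain ⟨C, hC⟩ := isCompact_Icc.exists_bound_of_continuousOn ycont
  have hC' : ∀ s ∈ Icc (0:ℝ) 1, |y s| ≤ C := fun s hs => hC s hs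
  have hC0 : 0 ≤ C := (abs_nonneg (y 0)).trans (hC' 0 ⟨le_rfl, zero_le_one⟩)
  have h1 : (1:ℝ) ∈ Icc (0:ℝ) 1 := ⟨zero_le_one, le_rfl⟩
  have heq := inteq V y hV hy0 hy
  set S : ℕ → ℝ := fun m => c ^ (m+1) / ((m:ℝ) + 2) ^ (m+2) with hS
  have hSnn : ∀ m, 0 ≤ S m := by
    intro m; rw [hS]; positivity
  have hfact : ∀ m : ℕ, ((m+1).factorial : ℝ) ≤ ((m:ℝ) + 2) ^ (m+2) := by
    intro m
    have h1' : (m+1).factorial ≤ (m+2).factorial := Nat.factorial_le (by omega)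
    have h2' : (m+2).factorial ≤ (m+2)^(m+2) := Nat.factorial_le_pow _
    have : ((m+1).factorial : ℝ) ≤ ((m+2:ℕ) : ℝ)^(m+2) := by
      exact_mod_cast h1'.trans h2'
    simpa [Nat.cast_add] using this
  have hSle : ∀ m, S m ≤ c ^ (m+1) / ((m+1).factorial : ℝ) := by
    intro m
    apply div_le_div_of_nonneg_left (by positivity) _ (hfact m)
    exact_mod_cast Nat.factorial_pos (m+1)
  have hsum2 : Summable (fun m : ℕ => c ^ (m+1) / ((m+1).factorial : ℝ)) := by
    have := Real.summable_pow_div_factorial c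
    exact_mod_cast (summable_nat_add_iff 1).mpr this
  have hsum : Summable S := Summable.of_nonneg_of_le hSnn hSle hsum2
  -- bound for each M
  have key : ∀ M : ℕ, |y 1 - 1| ≤ (∑' m, S m) + C * (c^(M+1) / ((M+1:ℕ):ℝ)^(M+1)) := by
    intro M
    have hid := identity V y hV ycont heq M 1 h1
    have hstep : y 1 - 1 = (∑ m ∈ Finset.range M, iter V (fun x => x) (m+1) 1)
        + iter V y (M+1) 1 := by rw [hid]; ring
    rw [hstep]
    have hPb : ∀ m ∈ Finset.range M, |iter V (fun x => x) (m+1) 1| ≤ S m := by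
      intro m _
      have := iterP_bound V hV (m+1) 1 h1
      refine this.trans (le_of_eq ?_)
      rw [hS]
      push_cast
      simp [one_pow]
      ring
    have hQb : |iter V y (M+1) 1| ≤ C * (c^(M+1) / ((M+1:ℕ):ℝ)^(M+1)) := by
      have := iterQ_bound V y hV ycont hC0 hC' (M+1) 1 h1
      refine this.trans (le_of_eq ?_)
      simp [one_pow]
      ring
    calc |(∑ m ∈ Finset.range M, iter V (fun x => x) (m+1) 1) + iter V y (M+1) 1|
        ≤ |∑ m ∈ Finset.range M, iter V (fun x => x) (m+1) 1| + |iter V y (M+1) 1| :=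
          abs_add_le _ _
      _ ≤ (∑ m ∈ Finset.range M, |iter V (fun x => x) (m+1) 1|) + |iter V y (M+1) 1| := by
          exact add_le_add_left (Finset.abs_sum_le_sum_abs _ _) _
      _ ≤ (∑ m ∈ Finset.range M, S m) + C * (c^(M+1) / ((M+1:ℕ):ℝ)^(M+1)) := by
          exact add_le_add (Finset.sum_le_sum hPb) hQb
      _ ≤ (∑' m, S m) + C * (c^(M+1) / ((M+1:ℕ):ℝ)^(M+1)) := by
          exact add_le_add_left (Summable.sum_le_tsum (Finset.range M) (fun i _ => hSnn i) hsum) _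
  -- take the limit
  have htend : Filter.Tendsto (fun M : ℕ => (∑' m, S m)
      + C * (c^(M+1) / ((M+1:ℕ):ℝ)^(M+1))) Filter.atTop (nhds ((∑' m, S m) + 0)) := by
    apply Filter.Tendsto.const_add
    have h0 : Filter.Tendsto (fun M : ℕ => c^(M+1) / ((M+1).factorial : ℝ))
        Filter.atTop (nhds 0) := by
      have := (Real.summable_pow_div_factorial c).tendsto_atTop_zero
      exact this.comp (Filter.tendsto_add_atTop_nat 1)
    have hb : ∀ M : ℕ, |c^(M+1) / ((M+1:ℕ):ℝ)^(M+1)| ≤ c^(M+1) / ((M+1).factorial : ℝ) := by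
      intro M
      rw [abs_of_nonneg (by positivity)]
      apply div_le_div_of_nonneg_left (by positivity) _ ?_
      · exact_mod_cast Nat.factorial_pos (M+1)
      · exact_mod_cast Nat.factorial_le_pow (M+1)
    have : Filter.Tendsto (fun M : ℕ => c^(M+1) / ((M+1:ℕ):ℝ)^(M+1))
        Filter.atTop (nhds 0) := squeeze_zero_norm hb h0
    simpa using this.const_mul C
  rw [add_zero] at htend
  exact ge_of_tendsto' htend key
end

section
/- Let V ∈ L¹[0,1] and let y solve -y'' + V y = 0 with y(0)=0, y'(0)=1. Then for all t ∈ [0,1], |y(t) - t| ≤ Σ_{m=0}^∞ t^{m+2}/(m+2)^{m+2} · (∫₀ᵗ |V(s)| ds)^{m+1}. -/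
/-!
Integrating the equation twice puts it in Volterra form
`y t - t = ∫₀ᵗ (t - s) V(s) y(s) ds`, so a bound `(t - s) |y s| ≤ c` on `[0, t]` gives
`|y t - t| ≤ c ∫₀ᵗ |V|`. Start from a bound `|y| ≤ K` and iterate, with `q = ∫₀ᵀ |V|`:
at each step a term `(s/k)^k` of the current bound on `|y s|` becomes, by AM-GM applied to
`t - s` and `k` copies of `s/k`, at most `(t/(k+1))^(k+1)`. After `n` steps `|y T - T|` is bounded
by the first `n` terms of the series plus `K q (T/(n+1))^(n+1) q^n`, which tends to `0`.
-/

open MeasureTheory Set intervalIntegral Real Filter Topology Finset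

theorem integral_integral_eq_integral_sub_mul {h : ℝ → ℝ} {a b : ℝ}
    (hh : IntervalIntegrable h volume a b) :
    ∫ u in a..b, ∫ s in a..u, h s = ∫ s in a..b, (b - s) * h s := by
  have hG := hh.absolutelyContinuousOnInterval_intervalIntegral left_mem_uIcc
  have hlin : AbsolutelyContinuousOnInterval (fun u => b - u) a b :=
    (contDiff_const.sub contDiff_id).contDiffOn.absolutelyContinuousOnInterval
  have hderiv : ∫ s in a..b, (b - s) * deriv (fun u => ∫ s in a..u, h s) s
      = ∫ s in a..b, (b - s) * h s := by
    refine integral_congr_ae ?_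
    filter_upwards [hh.ae_hasDerivAt_integral] with s hs hs'
    rw [(hs (uIoc_subset_uIcc hs') a left_mem_uIcc).deriv]
  have hibp := hlin.integral_mul_deriv_eq_deriv_mul hG
  rw [hderiv] at hibp
  simp only [sub_self, zero_mul, integral_same, mul_zero, deriv_const_sub_id', neg_mul, one_mul,
    intervalIntegral.integral_neg, sub_neg_eq_add, zero_add] at hibp
  linarith

theorem eq_add_integral_sub_mul_of_hasDerivWithinAt {y h : ℝ → ℝ} {a b y' : ℝ} (hab : a ≤ b)
    (hh : IntervalIntegrable h volume a b)
    (hy : ∀ t ∈ Icc a b, HasDerivWithinAt y (y' + ∫ s in a..t, h s) (Icc a b) t) :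
    y b = y a + y' * (b - a) + ∫ s in a..b, (b - s) * h s := by
  have hG := (hh.absolutelyContinuousOnInterval_intervalIntegral left_mem_uIcc).continuousOn
  have hFTC := integral_eq_sub_of_hasDerivAt_of_le hab (fun t ht => (hy t ht).continuousWithinAt)
    (fun t ht => (hy t (Ioo_subset_Icc_self ht)).hasDerivAt (Icc_mem_nhds ht.1 ht.2))
    (intervalIntegrable_const.add hG.intervalIntegrable)
  rw [integral_add intervalIntegrable_const hG.intervalIntegrable,
    intervalIntegral.integral_const, smul_eq_mul, integral_integral_eq_integral_sub_mul hh] at hFTC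
  linarith

theorem abs_integral_mul_le_mul_integral_abs {f g : ℝ → ℝ} {a b c : ℝ} (hab : a ≤ b)
    (hg : IntervalIntegrable g volume a b) (hf : ∀ s ∈ Icc a b, |f s| ≤ c) :
    |∫ s in a..b, f s * g s| ≤ c * ∫ s in a..b, |g s| := by
  rw [← intervalIntegral.integral_const_mul, ← Real.norm_eq_abs]
  refine norm_integral_le_of_norm_le hab (ae_of_all _ fun s hs => ?_) (hg.abs.const_mul c)
  rw [norm_mul, Real.norm_eq_abs, Real.norm_eq_abs]
  exact mul_le_mul_of_nonneg_right (hf s (Ioc_subset_Icc_self hs)) (abs_nonneg _)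

theorem abs_sub_le_of_sub_mul_abs_le {V y : ℝ → ℝ} {t c : ℝ} (ht : 0 ≤ t)
    (hV : IntervalIntegrable V volume 0 t) (hy0 : y 0 = 0)
    (hy : ∀ s ∈ Icc 0 t, HasDerivWithinAt y (1 + ∫ r in (0:ℝ)..s, V r * y r) (Icc 0 t) s)
    (hc : ∀ s ∈ Icc 0 t, (t - s) * |y s| ≤ c) :
    |y t - t| ≤ c * ∫ s in (0:ℝ)..t, |V s| := by
  have hycont : ContinuousOn y (uIcc 0 t) := by
    rw [uIcc_of_le ht]
    exact fun s hs => (hy s hs).continuousWithinAt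
  have hvolterra := eq_add_integral_sub_mul_of_hasDerivWithinAt ht (hV.mul_continuousOn hycont) hy
  rw [hy0, zero_add, one_mul, sub_zero] at hvolterra
  calc |y t - t| = |∫ s in (0:ℝ)..t, ((t - s) * y s) * V s| := by
        rw [hvolterra, add_sub_cancel_left]
        congr 1
        exact integral_congr fun s _ => by ring
    _ ≤ c * ∫ s in (0:ℝ)..t, |V s| := by
        refine abs_integral_mul_le_mul_integral_abs ht hV fun s hs => ?_
        rw [abs_mul, abs_of_nonneg (sub_nonneg.2 hs.2)]
        exact hc s hs

/-- What the Volterra form `y t - t = ∫₀ᵗ (t - s) V(s) y(s) ds` yields on `[0, T]`,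
with `q = ∫₀ᵀ |V|`. -/
def VolterraEstimate (y : ℝ → ℝ) (T q : ℝ) : Prop :=
  ∀ t ∈ Icc 0 T, ∀ c, (∀ s ∈ Icc 0 t, (t - s) * |y s| ≤ c) → |y t - t| ≤ c * q

theorem volterraEstimate_of_hasDerivWithinAt {V y : ℝ → ℝ} {T : ℝ}
    (hV : IntegrableOn V (Icc 0 1)) (hy0 : y 0 = 0)
    (hy : ∀ t ∈ Icc (0:ℝ) 1,
      HasDerivWithinAt y (1 + ∫ s in (0:ℝ)..t, V s * y s) (Icc (0:ℝ) 1) t)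
    (hT : T ∈ Icc (0:ℝ) 1) : VolterraEstimate y T (∫ s in (0:ℝ)..T, |V s|) := by
  have hV' : ∀ t ∈ Icc 0 T, IntervalIntegrable V volume 0 t := fun t ht =>
    (hV.mono_set (by rw [uIcc_of_le ht.1]; exact Icc_subset_Icc le_rfl (ht.2.trans hT.2)))
      |>.intervalIntegrable
  intro t ht c hc
  have htT : Icc 0 t ⊆ Icc 0 1 := Icc_subset_Icc le_rfl (ht.2.trans hT.2)
  refine (abs_sub_le_of_sub_mul_abs_le ht.1 (hV' t ht) hy0
    (fun s hs => (hy s (htT hs)).mono htT) hc).trans (mul_le_mul_of_nonneg_left ?_ ?_)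
  · exact integral_mono_interval le_rfl ht.1 ht.2 (ae_of_all _ fun _ => abs_nonneg _)
      (hV' T ⟨hT.1, le_rfl⟩).abs
  · simpa using hc t ⟨ht.1, le_rfl⟩

/-- `t ^ k / k ^ k` is the largest product of `k` nonnegative reals with sum `t`. -/
noncomputable def maxProd (k : ℕ) (t : ℝ) : ℝ := t ^ k / (k : ℝ) ^ k

theorem maxProd_nonneg (k : ℕ) {t : ℝ} (ht : 0 ≤ t) : 0 ≤ maxProd k t := by
  unfold maxProd
  positivity

theorem sub_mul_maxProd_le {s t : ℝ} (k : ℕ) (hs : 0 ≤ s) (hst : s ≤ t) :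
    (t - s) * maxProd k s ≤ maxProd (k + 1) t := by
  rcases k.eq_zero_or_pos with rfl | hk
  · simpa [maxProd] using hs
  rcases hs.eq_or_lt with rfl | hs
  · rw [sub_zero, maxProd, zero_pow hk.ne', zero_div, mul_zero]
    exact maxProd_nonneg _ hst
  have hk' : (0 : ℝ) < k := by exact_mod_cast hk
  -- Bernoulli's inequality at the ratio of the mean `t / (k + 1)` to `s / k`
  have hbern := one_add_mul_sub_le_pow (a := t / (k + 1) / (s / k)) (by
    have : 0 ≤ t / (k + 1) / (s / k) := by have := hs.trans_le hst; positivity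
    linarith) (k + 1)
  have e : 1 + ((k + 1 : ℕ) : ℝ) * (t / (k + 1) / (s / k) - 1) = (t - s) / (s / k) := by
    push_cast
    field_simp
    ring
  rw [e, div_pow, div_le_div_iff₀ (by positivity) (by positivity), pow_succ, ← mul_assoc] at hbern
  unfold maxProd
  push_cast
  rw [← div_pow, ← div_pow]
  exact le_of_mul_le_mul_right hbern (by positivity)

theorem maxProd_succ_mul_pow_le {t x : ℝ} (ht : 0 ≤ t) (hx : 0 ≤ x) (k : ℕ) :
    maxProd (k + 1) t * x ^ k ≤ t * (t * x) ^ k / k.factorial := by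
  have hfact : (k.factorial : ℝ) ≤ ((k + 1 : ℕ) : ℝ) ^ (k + 1) := by
    exact_mod_cast (Nat.factorial_le k.le_succ).trans (Nat.factorial_le_pow _)
  unfold maxProd
  rw [div_mul_eq_mul_div, mul_pow, ← mul_assoc, ← pow_succ']
  exact div_le_div_of_nonneg_left (by positivity) (by positivity) hfact

theorem summable_maxProd_succ_mul_pow {t x : ℝ} (ht : 0 ≤ t) (hx : 0 ≤ x) :
    Summable fun k : ℕ => maxProd (k + 1) t * x ^ k :=
  Summable.of_nonneg_of_le (fun k => mul_nonneg (maxProd_nonneg _ ht) (pow_nonneg hx k))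
    (maxProd_succ_mul_pow_le ht hx)
    (((Real.summable_pow_div_factorial (t * x)).mul_left t).congr fun _ =>
      (mul_div_assoc _ _ _).symm)

/-- The bound on `|y|` after `n` iterations started from `|y| ≤ K`; the shift `j = 1` gives the
bound on `(t - s) |y s|`. -/
noncomputable def iterBound (K q : ℝ) (j n : ℕ) (t : ℝ) : ℝ :=
  ∑ m ∈ range n, maxProd (m + j + 1) t * q ^ m + K * maxProd (n + j) t * q ^ n

theorem sub_mul_iterBound_le {K q s t : ℝ} (j n : ℕ) (hK : 0 ≤ K) (hq : 0 ≤ q) (hs : 0 ≤ s)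
    (hst : s ≤ t) : (t - s) * iterBound K q j n s ≤ iterBound K q (j + 1) n t := by
  unfold iterBound
  rw [mul_add, mul_sum]
  refine add_le_add (sum_le_sum fun m _ => ?_) ?_
  · rw [← mul_assoc]
    exact mul_le_mul_of_nonneg_right (sub_mul_maxProd_le _ hs hst) (pow_nonneg hq m)
  · calc (t - s) * (K * maxProd (n + j) s * q ^ n)
        = K * ((t - s) * maxProd (n + j) s) * q ^ n := by ring
      _ ≤ K * maxProd (n + (j + 1)) t * q ^ n := by
        gcongr
        exact sub_mul_maxProd_le _ hs hst

theorem add_mul_iterBound_one (K q t : ℝ) (n : ℕ) :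
    t + q * iterBound K q 1 n t = iterBound K q 0 (n + 1) t := by
  simp only [iterBound, sum_range_succ', mul_add, mul_sum, add_zero, zero_add, pow_zero, mul_one]
  have hone : maxProd 1 t = t := by simp [maxProd]
  simp only [hone, mul_left_comm q, ← pow_succ']
  ring

theorem le_tsum_of_forall_le_sum_add {x : ℝ} {a r : ℕ → ℝ} (ha : Summable a)
    (hr : Tendsto r atTop (𝓝 0)) (h : ∀ n, x ≤ ∑ m ∈ range n, a m + r n) : x ≤ ∑' m, a m := by
  have := ha.hasSum.tendsto_sum_nat.add hr
  rw [add_zero] at this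
  exact ge_of_tendsto' this h

section Iteration

variable {y : ℝ → ℝ} {T K q : ℝ}

theorem abs_sub_le_mul_iterBound (hq : 0 ≤ q) (hK : ∀ s ∈ Icc 0 T, |y s| ≤ K)
    (hest : VolterraEstimate y T q) {n : ℕ} (hn : ∀ s ∈ Icc 0 T, |y s| ≤ iterBound K q 0 n s) :
    ∀ t ∈ Icc 0 T, |y t - t| ≤ q * iterBound K q 1 n t := by
  intro t ht
  have hK0 : 0 ≤ K := (abs_nonneg _).trans (hK 0 ⟨le_rfl, ht.1.trans ht.2⟩)
  rw [mul_comm]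
  refine hest t ht _ fun s hs => ?_
  exact (mul_le_mul_of_nonneg_left (hn s ⟨hs.1, hs.2.trans ht.2⟩) (sub_nonneg.2 hs.2)).trans
    (sub_mul_iterBound_le 0 n hK0 hq hs.1 hs.2)

theorem abs_le_iterBound (hq : 0 ≤ q) (hK : ∀ s ∈ Icc 0 T, |y s| ≤ K)
    (hest : VolterraEstimate y T q) : ∀ n, ∀ t ∈ Icc 0 T, |y t| ≤ iterBound K q 0 n t
  | 0, t, ht => by simpa [iterBound, maxProd] using hK t ht
  | n + 1, t, ht => calc
      |y t| ≤ t + |y t - t| := by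
        simpa [abs_of_nonneg ht.1] using abs_add_le t (y t - t)
      _ ≤ t + q * iterBound K q 1 n t := by
        gcongr
        exact abs_sub_le_mul_iterBound hq hK hest (abs_le_iterBound hq hK hest n) t ht
      _ = iterBound K q 0 (n + 1) t := add_mul_iterBound_one K q t n

theorem abs_sub_le_tsum_maxProd (hT : 0 ≤ T) (hq : 0 ≤ q) (hK : ∀ s ∈ Icc 0 T, |y s| ≤ K)
    (hest : VolterraEstimate y T q) :
    |y T - T| ≤ ∑' m : ℕ, maxProd (m + 2) T * q ^ (m + 1) := by
  have hsum := summable_maxProd_succ_mul_pow hT hq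
  refine le_tsum_of_forall_le_sum_add ((summable_nat_add_iff 1).2 hsum)
    (by simpa using hsum.tendsto_atTop_zero.const_mul (K * q)) fun n => ?_
  calc |y T - T| ≤ q * iterBound K q 1 n T :=
        abs_sub_le_mul_iterBound hq hK hest (abs_le_iterBound hq hK hest n) T ⟨hT, le_rfl⟩
    _ = _ := by
        rw [iterBound, mul_add, mul_sum]
        congr 1
        · exact sum_congr rfl fun m _ => by ring
        · ring

end Iteration

theorem pointwise_bound_solution
    (V y : ℝ → ℝ)
    (hV : IntegrableOn V (Icc 0 1))
    (hy0 : y 0 = 0)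
    (hy : ∀ t ∈ Icc (0:ℝ) 1,
      HasDerivWithinAt y (1 + ∫ s in (0:ℝ)..t, V s * y s) (Icc (0:ℝ) 1) t) :
    ∀ t ∈ Icc (0:ℝ) 1,
      |y t - t| ≤ ∑' m : ℕ,
        t ^ (m + 2) / ((m + 2 : ℝ)) ^ (m + 2) * (∫ s in (0:ℝ)..t, |V s|) ^ (m + 1) := by
  intro T hT
  obtain ⟨K, hK⟩ :=
    isCompact_Icc.exists_bound_of_continuousOn fun t ht => (hy t ht).continuousWithinAt
  have hq : 0 ≤ ∫ s in (0:ℝ)..T, |V s| := integral_nonneg hT.1 fun _ _ => abs_nonneg _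
  calc |y T - T| ≤ ∑' m : ℕ, maxProd (m + 2) T * (∫ s in (0:ℝ)..T, |V s|) ^ (m + 1) :=
        abs_sub_le_tsum_maxProd hT.1 hq (fun s hs => hK s ⟨hs.1, hs.2.trans hT.2⟩)
          (volterraEstimate_of_hasDerivWithinAt hV hy0 hy hT)
    _ = _ := tsum_congr fun m => by
        simp only [maxProd]
        push_cast
        rfl
end

section
/- The map D : L¹[0,1] → ℝ sending a potential V to y_V(1), where y_V solves -y'' + V y = 0, y(0)=0, y'(0)=1, is Lipschitz on bounded sets: if ‖V₁‖₁ ≤ A and ‖V₂‖₁ ≤ A, then |D(V₁) - D(V₂)| ≤ e^{2(1+A)} ‖V₁ - V₂‖₁. -/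
open MeasureTheory Set intervalIntegral Real Topology Filter

noncomputable def proj01 (t : ℝ) : ℝ := max 0 (min 1 t)

lemma proj01_mem (t : ℝ) : proj01 t ∈ Icc (0:ℝ) 1 :=
  ⟨le_max_left _ _, max_le (by norm_num) (min_le_left _ _)⟩

lemma proj01_eq {t : ℝ} (ht : t ∈ Icc (0:ℝ) 1) : proj01 t = t := by
  unfold proj01; rw [min_eq_right ht.2, max_eq_right ht.1]

lemma proj01_continuous : Continuous proj01 :=
  continuous_const.max (continuous_const.min continuous_id)

lemma gronwall_cont (g z : ℝ → ℝ) (a : ℝ)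
    (hg : Continuous g) (hg0 : ∀ t, 0 ≤ g t) (hz : Continuous z)
    (h : ∀ t ∈ Icc (0:ℝ) 1, z t ≤ a + ∫ s in (0:ℝ)..t, g s * z s) :
    ∀ t ∈ Icc (0:ℝ) 1, z t ≤ a * Real.exp (∫ s in (0:ℝ)..t, g s) := by
  have hgz : Continuous (fun s => g s * z s) := hg.mul hz
  have hΦd : ∀ t : ℝ, HasDerivAt (fun u => ∫ s in (0:ℝ)..u, g s) (g t) t :=
    fun t => (hg.integral_hasStrictDerivAt 0 t).hasDerivAt
  have hBd : ∀ t : ℝ, HasDerivAt (fun u => a + ∫ s in (0:ℝ)..u, g s * z s) (g t * z t) t :=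
    fun t => ((hgz.integral_hasStrictDerivAt 0 t).hasDerivAt).const_add a
  set F : ℝ → ℝ := fun u => Real.exp (-(∫ s in (0:ℝ)..u, g s)) *
      (a + ∫ s in (0:ℝ)..u, g s * z s) with hFdef
  have hFd : ∀ t : ℝ, HasDerivAt F
      (Real.exp (-(∫ s in (0:ℝ)..t, g s)) * g t *
        (z t - (a + ∫ s in (0:ℝ)..t, g s * z s))) t := by
    intro t
    have h1 : HasDerivAt (fun u => Real.exp (-(∫ s in (0:ℝ)..u, g s)))
        (Real.exp (-(∫ s in (0:ℝ)..t, g s)) * (-(g t))) t := ((hΦd t).neg).exp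
    have h2 : HasDerivAt (fun u => Real.exp (-(∫ s in (0:ℝ)..u, g s)) * (a + ∫ s in (0:ℝ)..u, g s * z s))
        (Real.exp (-(∫ s in (0:ℝ)..t, g s)) * (-(g t)) * (a + ∫ s in (0:ℝ)..t, g s * z s) +
          Real.exp (-(∫ s in (0:ℝ)..t, g s)) * (g t * z t)) t := h1.mul (hBd t)
    convert h2 using 1
    ring
  have hanti : AntitoneOn F (Icc (0:ℝ) 1) := by
    apply antitoneOn_of_deriv_nonpos (convex_Icc 0 1)
    · exact fun x _ => ((hFd x).differentiableAt).continuousAt.continuousWithinAt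
    · exact fun x _ => ((hFd x).differentiableAt).differentiableWithinAt
    · intro x hx
      rw [interior_Icc] at hx
      rw [(hFd x).deriv]
      have hzB := h x ⟨hx.1.le, hx.2.le⟩
      exact mul_nonpos_of_nonneg_of_nonpos
        (mul_nonneg (Real.exp_pos _).le (hg0 x)) (by linarith)
  intro t ht
  have hF0 : F 0 = a := by
    simp [hFdef, intervalIntegral.integral_same]
  have hFt : F t ≤ a := by
    rw [← hF0]
    exact hanti (by constructor <;> norm_num) ht ht.1
  have hexp : (0:ℝ) < Real.exp (∫ s in (0:ℝ)..t, g s) := Real.exp_pos _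
  have hB : a + (∫ s in (0:ℝ)..t, g s * z s) ≤ a * Real.exp (∫ s in (0:ℝ)..t, g s) := by
    have := mul_le_mul_of_nonneg_left hFt hexp.le
    rw [hFdef] at this
    simp only at this
    rw [← mul_assoc, ← Real.exp_add] at this
    rw [mul_comm]
    simpa using this
  exact (h t ht).trans hB

lemma gronwall_L1 (g z : ℝ → ℝ) (a : ℝ) (ha : 0 ≤ a)
    (hgInt : IntegrableOn g (Icc 0 1))
    (hg0 : ∀ t ∈ Icc (0:ℝ) 1, 0 ≤ g t)
    (hz : ContinuousOn z (Icc 0 1))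
    (h : ∀ t ∈ Icc (0:ℝ) 1, z t ≤ a + ∫ s in (0:ℝ)..t, g s * z s) :
    ∀ t ∈ Icc (0:ℝ) 1, z t ≤ a * Real.exp (∫ s in (0:ℝ)..t, g s) := by
  set zz : ℝ → ℝ := fun s => z (proj01 s) with hzzdef
  have hzz : Continuous zz := hz.comp_continuous proj01_continuous proj01_mem
  have hzzeq : ∀ s ∈ Icc (0:ℝ) 1, zz s = z s := fun s hs => by rw [hzzdef]; simp [proj01_eq hs]
  obtain ⟨C0, hC0⟩ := isCompact_Icc.exists_bound_of_continuousOn hz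
  set C : ℝ := max C0 0 with hCdef
  have hC : ∀ s, |zz s| ≤ C := fun s => by
    rw [hzzdef]
    exact le_trans (by simpa [Real.norm_eq_abs] using hC0 _ (proj01_mem s)) (le_max_left _ _)
  have hC0' : (0:ℝ) ≤ C := le_max_right _ _
  have hcongr : ∀ u ∈ Icc (0:ℝ) 1, (∫ s in (0:ℝ)..u, g s * z s) = ∫ s in (0:ℝ)..u, g s * zz s := by
    intro u hu
    apply intervalIntegral.integral_congr
    intro s hs
    rw [uIcc_of_le hu.1] at hs
    show g s * z s = g s * zz s
    rw [hzzeq s ⟨hs.1, hs.2.trans hu.2⟩]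
  -- interval integrability of g on subintervals
  have Ig : ∀ u ∈ Icc (0:ℝ) 1, IntervalIntegrable g volume 0 u := by
    intro u hu
    rw [intervalIntegrable_iff_integrableOn_Icc_of_le hu.1]
    exact hgInt.mono_set (Icc_subset_Icc le_rfl hu.2)
  intro t ht
  -- main ε-estimate
  have key : ∀ ε : ℝ, 0 < ε →
      z t ≤ (a + C * ε) * (Real.exp (∫ s in (0:ℝ)..t, g s) * Real.exp ε) := by
    intro ε hε
    obtain ⟨G, -, hGle, hGcont, hGint⟩ :=
      (hgInt.integrable_indicator measurableSet_Icc).exists_hasCompactSupport_integral_sub_le hε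
    set G' : ℝ → ℝ := fun s => max (G s) 0 with hG'def
    have hG'cont : Continuous G' := hGcont.max continuous_const
    have hG'0 : ∀ s, 0 ≤ G' s := fun s => le_max_right _ _
    have hptw : ∀ s ∈ Icc (0:ℝ) 1, |g s - G' s| ≤ ‖(Icc (0:ℝ) 1).indicator g s - G s‖ := by
      intro s hs
      rw [Real.norm_eq_abs, indicator_of_mem hs]
      rcases le_total 0 (G s) with h' | h'
      · rw [hG'def]; simp [max_eq_left h']
      · rw [hG'def]; simp only [max_eq_right h']
        rw [sub_zero, abs_of_nonneg (hg0 s hs)]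
        have : g s ≤ g s - G s := by linarith
        exact this.trans (le_abs_self _)
    have hgG'Int : IntegrableOn (fun s => |g s - G' s|) (Icc 0 1) :=
      (hgInt.sub hG'cont.integrableOn_Icc).abs
    have IgG' : ∀ u ∈ Icc (0:ℝ) 1, IntervalIntegrable (fun s => |g s - G' s|) volume 0 u := by
      intro u hu
      rw [intervalIntegrable_iff_integrableOn_Icc_of_le hu.1]
      exact hgG'Int.mono_set (Icc_subset_Icc le_rfl hu.2)
    have hE1 : (∫ s in (0:ℝ)..1, |g s - G' s|) ≤ ε := by
      have step1 : (∫ s in (0:ℝ)..1, |g s - G' s|)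
          ≤ ∫ s in (0:ℝ)..1, ‖(Icc (0:ℝ) 1).indicator g s - G s‖ := by
        apply intervalIntegral.integral_mono_on (by norm_num)
          (IgG' 1 (by norm_num))
          (((hgInt.integrable_indicator measurableSet_Icc).sub hGint).norm.intervalIntegrable)
        intro s hs; exact hptw s hs
      have step2 : (∫ s in (0:ℝ)..1, ‖(Icc (0:ℝ) 1).indicator g s - G s‖)
          ≤ ∫ s, ‖(Icc (0:ℝ) 1).indicator g s - G s‖ := by
        rw [intervalIntegral.integral_of_le (by norm_num : (0:ℝ) ≤ 1)]
        exact setIntegral_le_integral ((hgInt.integrable_indicator measurableSet_Icc).sub hGint).norm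
          (Eventually.of_forall fun x => norm_nonneg _)
      exact (step1.trans step2).trans hGle
    have hE1t : ∀ u ∈ Icc (0:ℝ) 1, (∫ s in (0:ℝ)..u, |g s - G' s|) ≤ ε := by
      intro u hu
      refine le_trans ?_ hE1
      apply intervalIntegral.integral_mono_interval le_rfl hu.1 hu.2
        (Eventually.of_forall fun x => abs_nonneg _) (IgG' 1 (by norm_num))
    -- the perturbed integral inequality for zz
    have key' : ∀ u ∈ Icc (0:ℝ) 1, zz u ≤ (a + C * ε) + ∫ s in (0:ℝ)..u, G' s * zz s := by
      intro u hu
      have i1 : IntervalIntegrable (fun s => G' s * zz s) volume 0 u :=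
        (hG'cont.mul hzz).intervalIntegrable 0 u
      have i2 : IntervalIntegrable (fun s => (g s - G' s) * zz s) volume 0 u :=
        ((Ig u hu).sub (hG'cont.intervalIntegrable 0 u)).mul_continuousOn hzz.continuousOn
      have hsplit : (∫ s in (0:ℝ)..u, g s * zz s)
          = (∫ s in (0:ℝ)..u, G' s * zz s) + ∫ s in (0:ℝ)..u, (g s - G' s) * zz s := by
        rw [← intervalIntegral.integral_add i1 i2]
        apply intervalIntegral.integral_congr
        intro s _; ring
      have hbd : (∫ s in (0:ℝ)..u, (g s - G' s) * zz s) ≤ C * ε := by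
        have b1 : (∫ s in (0:ℝ)..u, (g s - G' s) * zz s)
            ≤ ∫ s in (0:ℝ)..u, |(g s - G' s) * zz s| := by
          refine le_trans (le_abs_self _) ?_
          exact intervalIntegral.abs_integral_le_integral_abs hu.1
        have b2 : (∫ s in (0:ℝ)..u, |(g s - G' s) * zz s|)
            ≤ ∫ s in (0:ℝ)..u, |g s - G' s| * C := by
          apply intervalIntegral.integral_mono_on hu.1 i2.abs ((IgG' u hu).mul_const C)
          intro s _
          rw [abs_mul]
          exact mul_le_mul_of_nonneg_left (hC s) (abs_nonneg _)
        have b3 : (∫ s in (0:ℝ)..u, |g s - G' s| * C) = (∫ s in (0:ℝ)..u, |g s - G' s|) * C :=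
          intervalIntegral.integral_mul_const _ _
        have b4 : (∫ s in (0:ℝ)..u, |g s - G' s|) * C ≤ ε * C :=
          mul_le_mul_of_nonneg_right (hE1t u hu) hC0'
        calc (∫ s in (0:ℝ)..u, (g s - G' s) * zz s) ≤ _ := b1
          _ ≤ _ := b2
          _ = _ := b3
          _ ≤ ε * C := b4
          _ = C * ε := mul_comm _ _
      have := h u hu
      rw [hcongr u hu, hsplit] at this
      rw [hzzeq u hu]
      linarith
    have hg' := gronwall_cont G' zz (a + C * ε) hG'cont hG'0 hzz key' t ht
    rw [hzzeq t ht] at hg'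
    refine hg'.trans ?_
    apply mul_le_mul_of_nonneg_left _ (by positivity)
    rw [← Real.exp_add]
    apply Real.exp_le_exp.2
    -- ∫ G' ≤ ∫ g + ε
    have i3 : IntervalIntegrable G' volume 0 t := hG'cont.intervalIntegrable 0 t
    have hsub : (∫ s in (0:ℝ)..t, G' s) - (∫ s in (0:ℝ)..t, g s)
        = ∫ s in (0:ℝ)..t, (G' s - g s) := (intervalIntegral.integral_sub i3 (Ig t ht)).symm
    have habs : (∫ s in (0:ℝ)..t, (G' s - g s)) ≤ ε := by
      refine le_trans (le_abs_self _) (le_trans (intervalIntegral.abs_integral_le_integral_abs ht.1) ?_)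
      refine le_trans (le_of_eq ?_) (hE1t t ht)
      apply intervalIntegral.integral_congr
      intro s _; show |G' s - g s| = |g s - G' s|; rw [abs_sub_comm]
    linarith
  -- pass to the limit ε → 0⁺
  have hcont : Continuous (fun ε : ℝ =>
      (a + C * ε) * (Real.exp (∫ s in (0:ℝ)..t, g s) * Real.exp ε)) := by fun_prop
  have hlim := (hcont.tendsto 0).mono_left (nhdsWithin_le_nhds (s := Ioi (0:ℝ)))
  have : z t ≤ (a + C * 0) * (Real.exp (∫ s in (0:ℝ)..t, g s) * Real.exp 0) := by
    apply ge_of_tendsto hlim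
    exact eventually_mem_nhdsWithin.mono (fun ε hε => key ε hε)
  simpa using this

lemma volterra (V y p r : ℝ → ℝ) (a A' : ℝ) (ha : 0 ≤ a)
    (hV : IntegrableOn V (Icc 0 1)) (hVA : (∫ t in (0:ℝ)..1, |V t|) ≤ A')
    (hycont : ContinuousOn y (Icc 0 1)) (hpcont : ContinuousOn p (Icc 0 1))
    (hyeq : ∀ t ∈ Icc (0:ℝ) 1, y t = ∫ s in (0:ℝ)..t, p s)
    (hpeq : ∀ t ∈ Icc (0:ℝ) 1, p t = r t + ∫ s in (0:ℝ)..t, V s * y s)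
    (hr : ∀ t ∈ Icc (0:ℝ) 1, |r t| ≤ a) :
    ∀ t ∈ Icc (0:ℝ) 1, |y t| + |p t| ≤ a * Real.exp (1 + A') := by
  set z : ℝ → ℝ := fun t => |y t| + |p t| with hzdef
  have hzc : ContinuousOn z (Icc 0 1) := hycont.abs.add hpcont.abs
  have IV : ∀ u ∈ Icc (0:ℝ) 1, IntervalIntegrable V volume 0 u := by
    intro u hu
    rw [intervalIntegrable_iff_integrableOn_Icc_of_le hu.1]
    exact hV.mono_set (Icc_subset_Icc le_rfl hu.2)
  have Iz : ∀ u ∈ Icc (0:ℝ) 1, IntervalIntegrable z volume 0 u := fun u hu =>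
    (hzc.mono (Icc_subset_Icc le_rfl hu.2)).intervalIntegrable_of_Icc hu.1
  have Ip : ∀ u ∈ Icc (0:ℝ) 1, IntervalIntegrable p volume 0 u := fun u hu =>
    (hpcont.mono (Icc_subset_Icc le_rfl hu.2)).intervalIntegrable_of_Icc hu.1
  have hgInt : IntegrableOn (fun s => 1 + |V s|) (Icc 0 1) :=
    (integrableOn_const (by simp)).add hV.abs
  have hbound : ∀ t ∈ Icc (0:ℝ) 1, z t ≤ a + ∫ s in (0:ℝ)..t, (1 + |V s|) * z s := by
    intro t ht
    have hyb : |y t| ≤ ∫ s in (0:ℝ)..t, z s := by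
      rw [hyeq t ht]
      refine (intervalIntegral.abs_integral_le_integral_abs ht.1).trans ?_
      apply intervalIntegral.integral_mono_on ht.1 (Ip t ht).abs (Iz t ht)
      intro s _
      exact le_add_of_nonneg_left (abs_nonneg _)
    have hpb : |p t| ≤ a + ∫ s in (0:ℝ)..t, |V s| * z s := by
      rw [hpeq t ht]
      refine (abs_add_le _ _).trans (add_le_add (hr t ht) ?_)
      refine (intervalIntegral.abs_integral_le_integral_abs ht.1).trans ?_
      apply intervalIntegral.integral_mono_on ht.1
        ((IV t ht).mul_continuousOn (hycont.mono (Icc_subset_Icc le_rfl ht.2) |>.mono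
          (by rw [uIcc_of_le ht.1]))).abs
        ((IV t ht).abs.mul_continuousOn (hzc.mono (Icc_subset_Icc le_rfl ht.2) |>.mono
          (by rw [uIcc_of_le ht.1])))
      intro s _
      rw [abs_mul]
      refine mul_le_mul_of_nonneg_left ?_ (abs_nonneg _)
      exact le_add_of_nonneg_right (abs_nonneg _)
    have hsplit : (∫ s in (0:ℝ)..t, (1 + |V s|) * z s)
        = (∫ s in (0:ℝ)..t, z s) + ∫ s in (0:ℝ)..t, |V s| * z s := by
      rw [← intervalIntegral.integral_add (Iz t ht)
        ((IV t ht).abs.mul_continuousOn (hzc.mono (Icc_subset_Icc le_rfl ht.2) |>.mono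
          (by rw [uIcc_of_le ht.1])))]
      apply intervalIntegral.integral_congr
      intro s _
      show (1 + |V s|) * z s = z s + |V s| * z s
      ring
    rw [hzdef]
    simp only
    rw [hsplit]
    linarith
  intro t ht
  have := gronwall_L1 (fun s => 1 + |V s|) z a ha hgInt
    (fun s _ => by positivity) hzc hbound t ht
  refine this.trans ?_
  apply mul_le_mul_of_nonneg_left _ ha
  apply Real.exp_le_exp.2
  have h1 : (∫ s in (0:ℝ)..t, (1 + |V s|)) = t + ∫ s in (0:ℝ)..t, |V s| := by
    rw [intervalIntegral.integral_add intervalIntegrable_const (IV t ht).abs]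
    simp
  rw [h1]
  have h2 : (∫ s in (0:ℝ)..t, |V s|) ≤ ∫ s in (0:ℝ)..1, |V s| := by
    apply intervalIntegral.integral_mono_interval le_rfl ht.1 ht.2
      (Eventually.of_forall fun x => abs_nonneg _)
    rw [intervalIntegrable_iff_integrableOn_Icc_of_le (by norm_num : (0:ℝ) ≤ 1)]
    exact hV.abs
  have := ht.2
  linarith

theorem determinant_lipschitz_on_bounded_sets
    (A : ℝ) (V₁ V₂ y₁ y₂ : ℝ → ℝ)
    (hV₁ : IntegrableOn V₁ (Icc 0 1))
    (hV₂ : IntegrableOn V₂ (Icc 0 1))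
    (hA₁ : (∫ t in (0:ℝ)..1, |V₁ t|) ≤ A)
    (hA₂ : (∫ t in (0:ℝ)..1, |V₂ t|) ≤ A)
    (hy₁0 : y₁ 0 = 0)
    (hy₁ : ∀ t ∈ Icc (0:ℝ) 1,
      HasDerivWithinAt y₁ (1 + ∫ s in (0:ℝ)..t, V₁ s * y₁ s) (Icc (0:ℝ) 1) t)
    (hy₂0 : y₂ 0 = 0)
    (hy₂ : ∀ t ∈ Icc (0:ℝ) 1,
      HasDerivWithinAt y₂ (1 + ∫ s in (0:ℝ)..t, V₂ s * y₂ s) (Icc (0:ℝ) 1) t) :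
    |y₁ 1 - y₂ 1| ≤ Real.exp (2 * (1 + A)) * ∫ t in (0:ℝ)..1, |V₁ t - V₂ t| := by
  have mem1 : (1:ℝ) ∈ Icc (0:ℝ) 1 := by norm_num
  have hy₁c : ContinuousOn y₁ (Icc 0 1) := fun t ht => (hy₁ t ht).continuousWithinAt
  have hy₂c : ContinuousOn y₂ (Icc 0 1) := fun t ht => (hy₂ t ht).continuousWithinAt
  have hVy₁ : IntegrableOn (fun s => V₁ s * y₁ s) (Icc 0 1) :=
    hV₁.mul_continuousOn hy₁c isCompact_Icc
  have hVy₂ : IntegrableOn (fun s => V₂ s * y₂ s) (Icc 0 1) :=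
    hV₂.mul_continuousOn hy₂c isCompact_Icc
  set p₁ : ℝ → ℝ := fun t => 1 + ∫ s in (0:ℝ)..t, V₁ s * y₁ s with hp₁def
  set p₂ : ℝ → ℝ := fun t => 1 + ∫ s in (0:ℝ)..t, V₂ s * y₂ s with hp₂def
  have prim : ∀ f : ℝ → ℝ, IntegrableOn f (Icc 0 1) →
      ContinuousOn (fun x => ∫ t in (0:ℝ)..x, f t) (Icc 0 1) := by
    intro f hf
    have := intervalIntegral.continuousOn_primitive_interval (a := 0) (b := 1)
      (μ := volume) (f := f) ?_
    · rwa [uIcc_of_le (by norm_num : (0:ℝ) ≤ 1)] at this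
    · rwa [uIcc_of_le (by norm_num : (0:ℝ) ≤ 1)]
  have hp₁c : ContinuousOn p₁ (Icc 0 1) := continuousOn_const.add (prim _ hVy₁)
  have hp₂c : ContinuousOn p₂ (Icc 0 1) := continuousOn_const.add (prim _ hVy₂)
  -- FTC: integral equations for y₁, y₂
  have ftc : ∀ (y p : ℝ → ℝ), y 0 = 0 → ContinuousOn y (Icc 0 1) → ContinuousOn p (Icc 0 1) →
      (∀ t ∈ Icc (0:ℝ) 1, HasDerivWithinAt y (p t) (Icc (0:ℝ) 1) t) →
      ∀ t ∈ Icc (0:ℝ) 1, y t = ∫ s in (0:ℝ)..t, p s := by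
    intro y p hy0 hyc hpc hyd t ht
    have := intervalIntegral.integral_eq_sub_of_hasDeriv_right_of_le ht.1
      (hyc.mono (Icc_subset_Icc le_rfl ht.2))
      (fun x hx => ((hyd x ⟨hx.1.le, hx.2.le.trans ht.2⟩).hasDerivAt
        (Icc_mem_nhds hx.1 (lt_of_lt_of_le hx.2 ht.2))).hasDerivWithinAt)
      ((hpc.mono (Icc_subset_Icc le_rfl ht.2)).intervalIntegrable_of_Icc ht.1)
    rw [hy0, sub_zero] at this
    exact this.symm
  have hy₁eq : ∀ t ∈ Icc (0:ℝ) 1, y₁ t = ∫ s in (0:ℝ)..t, p₁ s :=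
    ftc y₁ p₁ hy₁0 hy₁c hp₁c hy₁
  have hy₂eq : ∀ t ∈ Icc (0:ℝ) 1, y₂ t = ∫ s in (0:ℝ)..t, p₂ s :=
    ftc y₂ p₂ hy₂0 hy₂c hp₂c hy₂
  -- a priori bound on y₂
  have hM : ∀ t ∈ Icc (0:ℝ) 1, |y₂ t| + |p₂ t| ≤ 1 * Real.exp (1 + A) :=
    volterra V₂ y₂ p₂ (fun _ => 1) 1 A zero_le_one hV₂ hA₂ hy₂c hp₂c hy₂eq
      (fun t ht => by rw [hp₂def]) (fun t _ => by norm_num)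
  have hMy : ∀ t ∈ Icc (0:ℝ) 1, |y₂ t| ≤ Real.exp (1 + A) := by
    intro t ht
    have := hM t ht
    have := abs_nonneg (p₂ t)
    linarith
  -- setup for difference
  set D : ℝ := ∫ t in (0:ℝ)..1, |V₁ t - V₂ t| with hDdef
  have hV12 : IntegrableOn (fun s => V₁ s - V₂ s) (Icc 0 1) := hV₁.sub hV₂
  have IV12 : ∀ u ∈ Icc (0:ℝ) 1, IntervalIntegrable (fun s => V₁ s - V₂ s) volume 0 u := by
    intro u hu
    rw [intervalIntegrable_iff_integrableOn_Icc_of_le hu.1]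
    exact hV12.mono_set (Icc_subset_Icc le_rfl hu.2)
  have IV₁ : ∀ u ∈ Icc (0:ℝ) 1, IntervalIntegrable V₁ volume 0 u := by
    intro u hu
    rw [intervalIntegrable_iff_integrableOn_Icc_of_le hu.1]
    exact hV₁.mono_set (Icc_subset_Icc le_rfl hu.2)
  have IV₂ : ∀ u ∈ Icc (0:ℝ) 1, IntervalIntegrable V₂ volume 0 u := by
    intro u hu
    rw [intervalIntegrable_iff_integrableOn_Icc_of_le hu.1]
    exact hV₂.mono_set (Icc_subset_Icc le_rfl hu.2)
  have hD0 : 0 ≤ D := by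
    rw [hDdef]
    exact intervalIntegral.integral_nonneg (by norm_num) (fun u _ => abs_nonneg _)
  set r : ℝ → ℝ := fun t => ∫ s in (0:ℝ)..t, (V₁ s - V₂ s) * y₂ s with hrdef
  have hra : ∀ t ∈ Icc (0:ℝ) 1, |r t| ≤ Real.exp (1 + A) * D := by
    intro t ht
    have uic : uIcc (0:ℝ) t ⊆ Icc (0:ℝ) 1 := by
      rw [uIcc_of_le ht.1]; exact Icc_subset_Icc le_rfl ht.2
    have i1 : IntervalIntegrable (fun s => (V₁ s - V₂ s) * y₂ s) volume 0 t :=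
      (IV12 t ht).mul_continuousOn (hy₂c.mono uic)
    rw [hrdef]
    refine (intervalIntegral.abs_integral_le_integral_abs ht.1).trans ?_
    have step : (∫ s in (0:ℝ)..t, |(V₁ s - V₂ s) * y₂ s|)
        ≤ ∫ s in (0:ℝ)..t, |V₁ s - V₂ s| * Real.exp (1 + A) := by
      apply intervalIntegral.integral_mono_on ht.1 i1.abs ((IV12 t ht).abs.mul_const _)
      intro s hs
      rw [abs_mul]
      exact mul_le_mul_of_nonneg_left (hMy s ⟨hs.1, hs.2.trans ht.2⟩) (abs_nonneg _)
    refine step.trans ?_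
    rw [intervalIntegral.integral_mul_const]
    have h2 : (∫ s in (0:ℝ)..t, |V₁ s - V₂ s|) ≤ D := by
      rw [hDdef]
      apply intervalIntegral.integral_mono_interval le_rfl ht.1 ht.2
        (Eventually.of_forall fun x => abs_nonneg _)
      rw [intervalIntegrable_iff_integrableOn_Icc_of_le (by norm_num : (0:ℝ) ≤ 1)]
      exact hV12.abs
    calc (∫ s in (0:ℝ)..t, |V₁ s - V₂ s|) * Real.exp (1 + A)
        ≤ D * Real.exp (1 + A) := mul_le_mul_of_nonneg_right h2 (Real.exp_pos _).le
      _ = Real.exp (1 + A) * D := mul_comm _ _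
  -- integral equations for the differences
  set w : ℝ → ℝ := fun t => y₁ t - y₂ t with hwdef
  set q : ℝ → ℝ := fun t => p₁ t - p₂ t with hqdef
  have hwc : ContinuousOn w (Icc 0 1) := hy₁c.sub hy₂c
  have hqc : ContinuousOn q (Icc 0 1) := hp₁c.sub hp₂c
  have hweq : ∀ t ∈ Icc (0:ℝ) 1, w t = ∫ s in (0:ℝ)..t, q s := by
    intro t ht
    have i1 : IntervalIntegrable p₁ volume 0 t :=
      (hp₁c.mono (Icc_subset_Icc le_rfl ht.2)).intervalIntegrable_of_Icc ht.1
    have i2 : IntervalIntegrable p₂ volume 0 t :=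
      (hp₂c.mono (Icc_subset_Icc le_rfl ht.2)).intervalIntegrable_of_Icc ht.1
    rw [hwdef]
    show y₁ t - y₂ t = _
    rw [hy₁eq t ht, hy₂eq t ht, ← intervalIntegral.integral_sub i1 i2]
  have hqeq : ∀ t ∈ Icc (0:ℝ) 1, q t = r t + ∫ s in (0:ℝ)..t, V₁ s * w s := by
    intro t ht
    have uic : uIcc (0:ℝ) t ⊆ Icc (0:ℝ) 1 := by
      rw [uIcc_of_le ht.1]; exact Icc_subset_Icc le_rfl ht.2
    have i1 : IntervalIntegrable (fun s => V₁ s * y₁ s) volume 0 t :=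
      (IV₁ t ht).mul_continuousOn (hy₁c.mono uic)
    have i2 : IntervalIntegrable (fun s => V₂ s * y₂ s) volume 0 t :=
      (IV₂ t ht).mul_continuousOn (hy₂c.mono uic)
    have i3 : IntervalIntegrable (fun s => (V₁ s - V₂ s) * y₂ s) volume 0 t :=
      (IV12 t ht).mul_continuousOn (hy₂c.mono uic)
    have i4 : IntervalIntegrable (fun s => V₁ s * w s) volume 0 t :=
      (IV₁ t ht).mul_continuousOn (hwc.mono uic)
    have hcomb : (∫ s in (0:ℝ)..t, (V₁ s * y₁ s - V₂ s * y₂ s))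
        = (∫ s in (0:ℝ)..t, (V₁ s - V₂ s) * y₂ s) + ∫ s in (0:ℝ)..t, V₁ s * w s := by
      rw [← intervalIntegral.integral_add i3 i4]
      apply intervalIntegral.integral_congr
      intro s _
      show V₁ s * y₁ s - V₂ s * y₂ s = (V₁ s - V₂ s) * y₂ s + V₁ s * (y₁ s - y₂ s)
      ring
    have hsub := intervalIntegral.integral_sub i1 i2
    show p₁ t - p₂ t = (∫ s in (0:ℝ)..t, (V₁ s - V₂ s) * y₂ s) + ∫ s in (0:ℝ)..t, V₁ s * w s
    rw [hp₁def, hp₂def]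
    simp only
    linarith [hcomb, hsub]
  have hfin := volterra V₁ w q r (Real.exp (1 + A) * D) A (by positivity)
    hV₁ hA₁ hwc hqc hweq hqeq hra 1 mem1
  calc |y₁ 1 - y₂ 1| = |w 1| := rfl
    _ ≤ |w 1| + |q 1| := le_add_of_nonneg_right (abs_nonneg _)
    _ ≤ (Real.exp (1 + A) * D) * Real.exp (1 + A) := hfin
    _ = Real.exp (2 * (1 + A)) * D := by
        have h2 : Real.exp (2 * (1 + A)) = Real.exp (1 + A) * Real.exp (1 + A) := by
          rw [← Real.exp_add]; ring_nf
        rw [h2]; ring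
end

section
/- Let m > 0 and 0 ≤ x₁ ≤ x₂ ≤ 1, and let S = [x₁,x₂]. The solution y of -y'' + m·χ_S·y = 0 with y(0)=0, y'(0)=1 satisfies y(1) = (1/2)[ e^{√m(x₂-x₁)} (x₁ + 1/√m)(1 + √m - √m x₂) + e^{-√m(x₂-x₁)} (x₁ - 1/√m)(1 - √m + √m x₂) ]. -/
open MeasureTheory Set intervalIntegral Real

open Topology

theorem determinant_pulse_potential
    (m x₁ x₂ : ℝ) (hm : 0 < m) (h0 : 0 ≤ x₁) (h12 : x₁ ≤ x₂) (h21 : x₂ ≤ 1)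
    (y : ℝ → ℝ)
    (hy0 : y 0 = 0)
    (hy : ∀ t ∈ Icc (0:ℝ) 1,
      HasDerivWithinAt y
        (1 + ∫ s in (0:ℝ)..t, (Icc x₁ x₂).indicator (fun _ => m) s * y s)
        (Icc (0:ℝ) 1) t) :
    y 1 = (1/2) * (Real.exp (Real.sqrt m * (x₂ - x₁)) * (x₁ + 1 / Real.sqrt m)
            * (1 + Real.sqrt m - Real.sqrt m * x₂)
          + Real.exp (-(Real.sqrt m * (x₂ - x₁))) * (x₁ - 1 / Real.sqrt m)
            * (1 - Real.sqrt m + Real.sqrt m * x₂)) := by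
  set k := Real.sqrt m with hkdef
  have hk : 0 < k := Real.sqrt_pos.mpr hm
  have hk2 : k * k = m := Real.mul_self_sqrt hm.le
  set q : ℝ → ℝ := (Icc x₁ x₂).indicator (fun _ => m) with hq
  set f : ℝ → ℝ := fun s => q s * y s with hf
  set b : ℝ → ℝ := fun t => 1 + ∫ s in (0:ℝ)..t, f s with hb
  have hx1 : x₁ ∈ Icc (0:ℝ) 1 := ⟨h0, h12.trans h21⟩
  have hx2 : x₂ ∈ Icc (0:ℝ) 1 := ⟨h0.trans h12, h21⟩
  have hsub : Icc x₁ x₂ ⊆ Icc (0:ℝ) 1 := Icc_subset_Icc h0 h21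
  have ycont : ContinuousOn y (Icc 0 1) := fun t ht => (hy t ht).continuousWithinAt
  have hfind : f = (Icc x₁ x₂).indicator (fun s => m * y s) := by
    funext s; by_cases h : s ∈ Icc x₁ x₂ <;>
      simp [hf, hq, Set.indicator_of_mem, Set.indicator_of_notMem, h]
  have hIntOn : IntegrableOn f (Icc 0 1) := by
    rw [hfind]
    exact ((continuousOn_const.mul ycont).integrableOn_Icc).indicator measurableSet_Icc
  have hInt : ∀ u v : ℝ, u ∈ Icc (0:ℝ) 1 → v ∈ Icc (0:ℝ) 1 →
      IntervalIntegrable f volume u v := by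
    intro u v hu hv
    rw [intervalIntegrable_iff]
    exact hIntOn.mono_set ((Set.uIoc_subset_uIcc).trans (Set.uIcc_subset_Icc hu hv))
  have hae : ∀ c : ℝ, ∀ᵐ s : ℝ, s ≠ c := fun c => by rw [ae_iff]; simp [measure_singleton]
  -- Step A : b = 1 on [0, x₁]
  have hbA : ∀ t ∈ Icc (0:ℝ) x₁, b t = 1 := by
    intro t ht
    have hz : (∫ s in (0:ℝ)..t, f s) = ∫ s in (0:ℝ)..t, (0:ℝ) := by
      apply intervalIntegral.integral_congr_ae
      filter_upwards [hae x₁] with s hs hmem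
      rw [uIoc_of_le ht.1] at hmem
      have hs1 : s < x₁ := lt_of_le_of_ne (hmem.2.trans ht.2) hs
      have hnot : s ∉ Icc x₁ x₂ := by intro hc; exact absurd hc.1 (not_le.mpr hs1)
      simp [hf, hq, Set.indicator_of_notMem hnot]
    simp [hb, hz]
  have hbx1 : b x₁ = 1 := hbA x₁ ⟨h0, le_rfl⟩
  -- Step B : y x₁ = x₁
  have hyx1 : y x₁ = x₁ := by
    have key : ∀ u ∈ Icc (0:ℝ) x₁, (fun u => y u - u) u = (fun u => y u - u) 0 := by
      apply constant_of_has_deriv_right_zero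
      · exact (ycont.mono (Icc_subset_Icc le_rfl hx1.2)).sub continuousOn_id
      · intro t ht
        have ht1 : t ∈ Icc (0:ℝ) 1 := ⟨ht.1, ht.2.le.trans hx1.2⟩
        have hd1 : HasDerivWithinAt y 1 (Icc 0 1) t := by
          have := hy t ht1
          rwa [show (1 + ∫ s in (0:ℝ)..t, q s * y s) = b t from rfl,
            hbA t ⟨ht.1, ht.2.le⟩] at this
        have hmem : Icc (0:ℝ) 1 ∈ 𝓝[Ici t] t :=
          Icc_mem_nhdsGE_of_mem ⟨ht1.1, lt_of_lt_of_le ht.2 hx1.2⟩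
        have hIci : HasDerivWithinAt y 1 (Ici t) t := hd1.mono_of_mem_nhdsWithin hmem
        exact (hIci.sub (hasDerivWithinAt_id t (Ici t))).congr_deriv (by norm_num)
    have := key x₁ ⟨h0, le_rfl⟩
    simp [hy0] at this
    linarith
  -- the explicit solution on the middle interval
  set Y : ℝ → ℝ := fun t => x₁ * Real.cosh (k*(t-x₁)) + (1/k) * Real.sinh (k*(t-x₁)) with hY
  set B : ℝ → ℝ := fun t => x₁ * k * Real.sinh (k*(t-x₁)) + Real.cosh (k*(t-x₁)) with hB
  have harg : ∀ t : ℝ, HasDerivAt (fun u => k*(u-x₁)) k t := by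
    intro t
    simpa using ((hasDerivAt_id t).sub_const x₁).const_mul k
  have hYd : ∀ t, HasDerivAt Y (B t) t := by
    intro t
    have hc : HasDerivAt (fun u => Real.cosh (k*(u-x₁))) (Real.sinh (k*(t-x₁)) * k) t :=
      (Real.hasDerivAt_cosh _).comp t (harg t)
    have hs : HasDerivAt (fun u => Real.sinh (k*(u-x₁))) (Real.cosh (k*(t-x₁)) * k) t :=
      (Real.hasDerivAt_sinh _).comp t (harg t)
    have := (hc.const_mul x₁).add (hs.const_mul (1/k))
    refine this.congr_deriv ?_
    field_simp [hB]
    ring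
  have hBd : ∀ t, HasDerivAt B (m * Y t) t := by
    intro t
    have hc : HasDerivAt (fun u => Real.cosh (k*(u-x₁))) (Real.sinh (k*(t-x₁)) * k) t :=
      (Real.hasDerivAt_cosh _).comp t (harg t)
    have hs : HasDerivAt (fun u => Real.sinh (k*(u-x₁))) (Real.cosh (k*(t-x₁)) * k) t :=
      (Real.hasDerivAt_sinh _).comp t (harg t)
    have := (hs.const_mul (x₁ * k)).add hc
    refine this.congr_deriv ?_
    rw [hY, ← hk2]
    field_simp
  -- the vector field
  set L : ℝ × ℝ →L[ℝ] ℝ × ℝ :=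
    (ContinuousLinearMap.snd ℝ ℝ ℝ).prod (m • ContinuousLinearMap.fst ℝ ℝ ℝ) with hL
  set v : ℝ → ℝ × ℝ → ℝ × ℝ := fun _ p => (p.2, m * p.1) with hv
  have hvL : ∀ t p, v t p = L p := by
    intro t p
    simp [hv, hL, ContinuousLinearMap.prod_apply, smul_eq_mul]
  have hlip : ∀ t, LipschitzWith ‖L‖₊ (v t) := by
    intro t
    have : v t = (L : ℝ × ℝ → ℝ × ℝ) := funext (hvL t)
    rw [this]
    exact L.lipschitz
  -- continuity of b
  have hbcont : ContinuousOn b (Icc 0 1) := by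
    have h1 : IntegrableOn f (uIcc (0:ℝ) 1) := by
      rwa [uIcc_of_le (by norm_num : (0:ℝ) ≤ 1)]
    have := intervalIntegral.continuousOn_primitive_interval (a := (0:ℝ)) (b := 1) (μ := volume) h1
    rw [uIcc_of_le (by norm_num : (0:ℝ) ≤ 1)] at this
    exact continuousOn_const.add this
  -- middle-interval ODE derivatives
  set F : ℝ → ℝ × ℝ := fun t => (y t, b t) with hF
  set G : ℝ → ℝ × ℝ := fun t => (Y t, B t) with hG
  have hmid : EqOn F G (Icc x₁ x₂) := by
    apply ODE_solution_unique_of_mem_Icc_right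
      (v := v) (s := fun _ => (univ : Set (ℝ × ℝ))) (K := ‖L‖₊)
    · exact fun t _ => (hlip t).lipschitzOnWith
    · exact (ycont.mono hsub).prodMk (hbcont.mono hsub)
    · intro t ht
      have ht01 : t ∈ Icc (0:ℝ) 1 := hsub ⟨ht.1, ht.2.le⟩
      have htlt1 : t < 1 := lt_of_lt_of_le ht.2 h21
      have hmem01 : Icc (0:ℝ) 1 ∈ 𝓝[Ici t] t := Icc_mem_nhdsGE_of_mem ⟨ht01.1, htlt1⟩
      have hyd : HasDerivWithinAt y (b t) (Ici t) t :=
        (hy t ht01).mono_of_mem_nhdsWithin hmem01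
      -- derivative of b
      have hy_int : IntervalIntegrable y volume x₁ t :=
        (ycont.mono (by rw [uIcc_of_le ht.1]; exact Icc_subset_Icc hx1.1 ht01.2)).intervalIntegrable
      have hIocsub : Ioc t x₂ ⊆ Icc (0:ℝ) 1 := fun s hs => hsub ⟨ht.1.trans hs.1.le, hs.2⟩
      have hmemIoc : Ioc t x₂ ∈ 𝓝[Ioi t] t := by
        rw [← nhdsWithin_Ioc_eq_nhdsGT ht.2]
        exact self_mem_nhdsWithin
      have hmeas : StronglyMeasurableAtFilter y (𝓝[Ioi t] t) volume :=
        ⟨Ioc t x₂, hmemIoc, (ycont.mono hIocsub).aestronglyMeasurable measurableSet_Ioc⟩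
      have hcw : ContinuousWithinAt y (Ioi t) t := by
        have h1 : ContinuousWithinAt y (Ioc t x₂) t := (ycont t ht01).mono hIocsub
        rwa [ContinuousWithinAt, nhdsWithin_Ioc_eq_nhdsGT ht.2] at h1
      have hprim : HasDerivWithinAt (fun u => ∫ s in x₁..u, y s) (y t) (Ici t) t :=
        intervalIntegral.integral_hasDerivWithinAt_right hy_int hmeas hcw
      have hbd' : HasDerivWithinAt (fun u => b x₁ + m * ∫ s in x₁..u, y s) (m * y t)
          (Ici t) t := by
        exact (hprim.const_mul m).const_add (b x₁)
      have heq : EqOn b (fun u => b x₁ + m * ∫ s in x₁..u, y s) (Icc x₁ x₂) := by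
        intro u hu
        have hu01 : u ∈ Icc (0:ℝ) 1 := hsub hu
        have h1 : ∫ s in (0:ℝ)..u, f s = (∫ s in (0:ℝ)..x₁, f s) + ∫ s in x₁..u, f s :=
          (intervalIntegral.integral_add_adjacent_intervals
            (hInt 0 x₁ ⟨le_rfl, zero_le_one⟩ hx1) (hInt x₁ u hx1 hu01)).symm
        have h2 : ∫ s in x₁..u, f s = ∫ s in x₁..u, m * y s := by
          apply intervalIntegral.integral_congr
          intro s hs
          rw [uIcc_of_le hu.1] at hs
          have hmem : s ∈ Icc x₁ x₂ := ⟨hs.1, hs.2.trans hu.2⟩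
          simp [hf, hq, Set.indicator_of_mem hmem]
        simp only [hb]
        rw [h1, h2, intervalIntegral.integral_const_mul]
        ring
      have hbd : HasDerivWithinAt b (m * y t) (Ici t) t := by
        refine hbd'.congr_of_eventuallyEq ?_ (heq ⟨ht.1, ht.2.le⟩)
        exact Filter.eventuallyEq_of_mem (Icc_mem_nhdsGE_of_mem ⟨ht.1, ht.2⟩) heq
      exact hyd.prodMk hbd
    · exact fun _ _ => trivial
    · have hYc : Continuous Y := continuous_iff_continuousAt.mpr fun t => (hYd t).continuousAt
      have hBc : Continuous B := continuous_iff_continuousAt.mpr fun t => (hBd t).continuousAt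
      exact (hYc.prodMk hBc).continuousOn
    · intro t ht
      exact ((hYd t).hasDerivWithinAt).prodMk ((hBd t).hasDerivWithinAt)
    · exact fun _ _ => trivial
    · simp [hF, hG, hY, hB, hyx1, hbx1]
  have hx2mem : x₂ ∈ Icc x₁ x₂ := right_mem_Icc.mpr h12
  have hyx2 : y x₂ = Y x₂ := congrArg Prod.fst (hmid hx2mem)
  have hbx2 : b x₂ = B x₂ := congrArg Prod.snd (hmid hx2mem)
  -- Step D : b is constant on [x₂, 1]
  have hbD : ∀ t ∈ Icc x₂ 1, b t = b x₂ := by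
    intro t ht
    have ht01 : t ∈ Icc (0:ℝ) 1 := ⟨hx2.1.trans ht.1, ht.2⟩
    have h1 : ∫ s in (0:ℝ)..t, f s = (∫ s in (0:ℝ)..x₂, f s) + ∫ s in x₂..t, f s :=
      (intervalIntegral.integral_add_adjacent_intervals
        (hInt 0 x₂ ⟨le_rfl, zero_le_one⟩ hx2) (hInt x₂ t hx2 ht01)).symm
    have h2 : ∫ s in x₂..t, f s = ∫ s in x₂..t, (0:ℝ) := by
      apply intervalIntegral.integral_congr_ae
      filter_upwards with s hmem
      rw [uIoc_of_le ht.1] at hmem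
      have hnot : s ∉ Icc x₁ x₂ := by intro hc; exact absurd hc.2 (not_le.mpr hmem.1)
      simp [hf, hq, Set.indicator_of_notMem hnot]
    simp only [hb]
    rw [h1, h2]
    simp
  -- Step E : y on [x₂, 1]
  have hy1 : y 1 = y x₂ + b x₂ * (1 - x₂) := by
    have key : ∀ u ∈ Icc x₂ 1, (fun u => y u - b x₂ * u) u = (fun u => y u - b x₂ * u) x₂ := by
      apply constant_of_has_deriv_right_zero
      · exact (ycont.mono (Icc_subset_Icc hx2.1 le_rfl)).sub
          (continuousOn_const.mul continuousOn_id)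
      · intro t ht
        have ht01 : t ∈ Icc (0:ℝ) 1 := ⟨hx2.1.trans ht.1, ht.2.le⟩
        have hd1 : HasDerivWithinAt y (b x₂) (Icc 0 1) t := by
          have := hy t ht01
          rwa [show (1 + ∫ s in (0:ℝ)..t, q s * y s) = b t from rfl,
            hbD t ⟨ht.1, ht.2.le⟩] at this
        have hIci := hd1.mono_of_mem_nhdsWithin (Icc_mem_nhdsGE_of_mem ⟨ht01.1, ht.2⟩)
        exact (hIci.sub ((hasDerivWithinAt_id t (Ici t)).const_mul (b x₂))).congr_deriv (by ring)
    have := key 1 ⟨h21, le_rfl⟩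
    simp only at this
    linarith
  rw [hy1, hyx2, hbx2]
  simp only [hY, hB, Real.cosh_eq, Real.sinh_eq]
  field_simp
  ring
end

section
/- For A > 0, 0 < s < 1 and 0 < ℓ ≤ 2 min{s, 1-s}, let y(s,ℓ) be the value at t=1 of the solution of -y'' + V y = 0, y(0)=0, y'(0)=1, where V = (A/ℓ)·χ_{[s-ℓ/2, s+ℓ/2]}. Then y(s,ℓ) = (1-ℓ) cosh(√(Aℓ)) + A[(s - s²) + (1/A - 1/2)ℓ + ℓ²/4] · sinh(√(Aℓ))/√(Aℓ). -/
open MeasureTheory Set intervalIntegral Real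

private lemma pulse_value (a b c : ℝ) (ha0 : 0 ≤ a) (hab : a < b) (hb1 : b ≤ 1) (hc : 0 < c)
    (y : ℝ → ℝ) (hy0 : y 0 = 0)
    (hy : ∀ t ∈ Icc (0:ℝ) 1,
      HasDerivWithinAt y
        (1 + ∫ u in (0:ℝ)..t, (Icc a b).indicator (fun u => c * y u) u)
        (Icc (0:ℝ) 1) t) :
    y 1 = (a + 1 - b) * Real.cosh (Real.sqrt c * (b - a))
        + (1/Real.sqrt c + a*(1-b)*Real.sqrt c) * Real.sinh (Real.sqrt c * (b - a)) := by
  set k := Real.sqrt c with hkdef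
  have hk : 0 < k := Real.sqrt_pos.mpr hc
  have hk2 : k * k = c := Real.mul_self_sqrt hc.le
  set g : ℝ → ℝ := (Icc a b).indicator (fun u => c * y u) with hgdef
  have hsub : Icc a b ⊆ Icc (0:ℝ) 1 := Icc_subset_Icc ha0 hb1
  have hycont : ContinuousOn y (Icc (0:ℝ) 1) := fun t ht => (hy t ht).continuousWithinAt
  have hcy : ContinuousOn (fun u => c * y u) (Icc a b) :=
    continuousOn_const.mul (hycont.mono hsub)
  have hgmeas : AEStronglyMeasurable g volume := by
    rw [hgdef, aestronglyMeasurable_indicator_iff measurableSet_Icc]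
    exact hcy.aestronglyMeasurable measurableSet_Icc
  have hgint : Integrable g volume := by
    rw [hgdef, integrable_indicator_iff measurableSet_Icc]
    exact hcy.integrableOn_Icc
  have hgii : ∀ u v : ℝ, IntervalIntegrable g volume u v := fun u v =>
    hgint.intervalIntegrable
  set P : ℝ → ℝ := fun t => 1 + ∫ u in (0:ℝ)..t, g u with hPdef
  have hPcont : Continuous P :=
    continuous_const.add (intervalIntegral.continuous_primitive hgii 0)
  -- integral computations
  have I1 : ∀ t : ℝ, 0 ≤ t → t ≤ a → (∫ u in (0:ℝ)..t, g u) = 0 := by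
    intro t h0t hta
    rw [intervalIntegral.integral_of_le h0t, hgdef,
      setIntegral_indicator measurableSet_Icc]
    have hnull : volume (Ioc 0 t ∩ Icc a b) = 0 := by
      refine measure_mono_null (fun x hx => ?_) (measure_singleton a)
      exact mem_singleton_iff.mpr (le_antisymm (hx.1.2.trans hta) hx.2.1)
    rw [Measure.restrict_eq_zero.mpr hnull, integral_zero_measure]
  have I3 : ∀ t : ℝ, b ≤ t → (∫ u in (0:ℝ)..t, g u) = ∫ u in (0:ℝ)..b, g u := by
    intro t hbt
    rw [← intervalIntegral.integral_add_adjacent_intervals (hgii 0 b) (hgii b t)]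
    have : (∫ u in b..t, g u) = 0 := by
      rw [intervalIntegral.integral_of_le hbt, hgdef,
        setIntegral_indicator measurableSet_Icc]
      have hnull : volume (Ioc b t ∩ Icc a b) = 0 := by
        refine measure_mono_null (fun x hx => ?_) (measure_singleton b)
        exact absurd (hx.1.1.trans_le hx.2.2) (lt_irrefl b)
      rw [Measure.restrict_eq_zero.mpr hnull, integral_zero_measure]
    rw [this, add_zero]
  -- derivative within Ici t from within Icc 0 1
  have hmono : ∀ x : ℝ, 0 ≤ x → x < 1 → Icc (0:ℝ) 1 ∈ nhdsWithin x (Ici x) := by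
    intro x h0 h1
    refine Filter.mem_of_superset (inter_mem_nhdsWithin (Ici x) (Iic_mem_nhds h1)) ?_
    exact fun u hu => ⟨h0.trans hu.1, hu.2⟩
  have hyP : ∀ t ∈ Icc (0:ℝ) 1, HasDerivWithinAt y (P t) (Icc (0:ℝ) 1) t := hy
  -- Step A : y = id on [0, a]
  have stepA : ∀ t ∈ Icc 0 a, y t = t := by
    refine eq_of_has_deriv_right_eq (f' := fun _ => (1:ℝ)) (fun x hx => ?_)
      (fun x hx => (hasDerivWithinAt_id x _))
      (hycont.mono (Icc_subset_Icc le_rfl (hab.le.trans hb1)))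
      continuousOn_id (by simp [hy0])
    have hx1 : x < 1 := lt_of_lt_of_le (lt_trans hx.2 hab) hb1
    have := (hyP x ⟨hx.1, hx1.le⟩).mono_of_mem_nhdsWithin (hmono x hx.1 hx1)
    simpa [hPdef, I1 x hx.1 hx.2.le] using this
  have ya : y a = a := stepA a ⟨ha0, le_rfl⟩
  -- Step B : ODE uniqueness on [a, b]
  set z : ℝ → ℝ := fun t => a * Real.cosh (k*(t-a)) + (1/k) * Real.sinh (k*(t-a)) with hzdef
  set w : ℝ → ℝ := fun t => a * k * Real.sinh (k*(t-a)) + Real.cosh (k*(t-a)) with hwdef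
  have hlin : ∀ t : ℝ, HasDerivAt (fun t => k*(t-a)) k t := by
    intro t
    simpa using ((hasDerivAt_id t).sub_const a).const_mul k
  have hkk : (1/k) * k = 1 := one_div_mul_cancel hk.ne'
  have hck : c * (1/k) = k := by
    rw [mul_one_div, div_eq_iff hk.ne']
    exact hk2.symm
  have hz' : ∀ t : ℝ, HasDerivAt z (w t) t := by
    intro t
    have := ((((hlin t).cosh).const_mul a).add (((hlin t).sinh).const_mul (1/k)))
    refine this.congr_deriv (Eq.symm ?_)
    rw [hwdef]
    linear_combination (-Real.cosh (k*(t-a))) * hkk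
  have hw' : ∀ t : ℝ, HasDerivAt w (c * z t) t := by
    intro t
    have := ((((hlin t).sinh).const_mul (a*k)).add ((hlin t).cosh))
    refine this.congr_deriv (Eq.symm ?_)
    rw [hzdef]
    linear_combination (-(a * Real.cosh (k*(t-a)))) * hk2 + Real.sinh (k*(t-a)) * hck
  set F : ℝ → ℝ × ℝ := fun t => (y t, P t) with hFdef
  set Z : ℝ → ℝ × ℝ := fun t => (z t, w t) with hZdef
  set v : ℝ → ℝ × ℝ → ℝ × ℝ := fun _ p => (p.2, c * p.1) with hvdef
  have hlip2 : LipschitzWith ‖c‖₊ (fun p : ℝ × ℝ => c * p.1) := by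
    refine LipschitzWith.of_dist_le_mul fun p q => ?_
    rw [Real.dist_eq, ← mul_sub, abs_mul]
    have h1 : |p.1 - q.1| ≤ dist p q := by
      rw [← Real.dist_eq, Prod.dist_eq]; exact le_max_left _ _
    calc |c| * |p.1 - q.1| ≤ |c| * dist p q :=
          mul_le_mul_of_nonneg_left h1 (abs_nonneg c)
      _ = ‖c‖₊ * dist p q := by rw [coe_nnnorm, Real.norm_eq_abs]
  have hlip : ∀ t : ℝ, LipschitzWith (max 1 ‖c‖₊) (v t) := fun t =>
    LipschitzWith.prod_snd.prodMk hlip2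
  have hF' : ∀ t ∈ Ico a b, HasDerivWithinAt F (v t (F t)) (Ici t) t := by
    intro t ht
    have ht0 : 0 ≤ t := ha0.trans ht.1
    have ht1 : t < 1 := lt_of_lt_of_le ht.2 hb1
    have h1 : HasDerivWithinAt y (P t) (Ici t) t :=
      (hyP t ⟨ht0, ht1.le⟩).mono_of_mem_nhdsWithin (hmono t ht0 ht1)
    have hgt : g t = c * y t :=
      indicator_of_mem (show t ∈ Icc a b from ⟨ht.1, ht.2.le⟩) _
    have hcg : ContinuousWithinAt g (Ici t) t := by
      have hy1 : ContinuousWithinAt (fun u => c * y u) (Ici t) t := by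
        refine ContinuousWithinAt.mono_of_mem_nhdsWithin ?_ (hmono t ht0 ht1)
        exact (continuousOn_const.mul hycont) t ⟨ht0, ht1.le⟩
      refine hy1.congr_of_eventuallyEq ?_ hgt
      have hmem : Ici t ∩ Iio b ∈ nhdsWithin t (Ici t) :=
        inter_mem_nhdsWithin (Ici t) (Iio_mem_nhds ht.2)
      filter_upwards [hmem] with u hu
      exact indicator_of_mem (show u ∈ Icc a b from ⟨ht.1.trans hu.1, hu.2.le⟩) _
    have h2 : HasDerivWithinAt P (c * y t) (Ici t) t := by
      have h4 : HasDerivWithinAt (fun u => ∫ x in (0:ℝ)..u, g x) (g t) (Ici t) t :=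
        intervalIntegral.integral_hasDerivWithinAt_right (hgii 0 t)
          ⟨univ, Filter.univ_mem, hgmeas.restrict⟩ (hcg.mono Ioi_subset_Ici_self)
      have h3 := (hasDerivWithinAt_const t (Ici t) (1:ℝ)).add h4
      rw [zero_add] at h3
      rw [hPdef, ← hgt]
      exact h3
    exact h1.prodMk h2
  have hZ' : ∀ t ∈ Ico a b, HasDerivWithinAt Z (v t (Z t)) (Ici t) t := fun t _ =>
    ((hz' t).prodMk (hw' t)).hasDerivWithinAt
  have hFcont : ContinuousOn F (Icc a b) :=
    (hycont.mono hsub).prodMk hPcont.continuousOn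
  have hZcont : ContinuousOn Z (Icc a b) := by
    have h1 : ContinuousOn z (Icc a b) := fun t _ => (hz' t).continuousAt.continuousWithinAt
    have h2 : ContinuousOn w (Icc a b) := fun t _ => (hw' t).continuousAt.continuousWithinAt
    exact h1.prodMk h2
  have hinit : F a = Z a := by
    have hPa : P a = 1 := by rw [hPdef]; simp [I1 a ha0 le_rfl]
    have hza : z a = a := by rw [hzdef]; simp
    have hwa : w a = 1 := by rw [hwdef]; simp
    rw [hFdef, hZdef]; simp [ya, hPa, hza, hwa]
  have stepB : F b = Z b :=
    ODE_solution_unique hlip hFcont hF' hZcont hZ' hinit ⟨hab.le, le_rfl⟩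
  have yb : y b = z b := congrArg Prod.fst stepB
  have Pb : P b = w b := congrArg Prod.snd stepB
  -- Step C : linear on [b, 1]
  have stepC : ∀ t ∈ Icc b 1, y t = y b + P b * (t - b) := by
    refine eq_of_has_deriv_right_eq (f' := fun _ => P b) (fun x hx => ?_)
      (fun x hx => ?_)
      (hycont.mono (Icc_subset_Icc (ha0.trans hab.le) le_rfl))
      (Continuous.continuousOn (by fun_prop)) (by simp)
    · have hx0 : 0 ≤ x := (ha0.trans hab.le).trans hx.1
      have h := (hyP x ⟨hx0, hx.2.le⟩).mono_of_mem_nhdsWithin (hmono x hx0 hx.2)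
      have heq : P x = P b := by
        simp only [hPdef]
        rw [I3 x hx.1]
      rwa [heq] at h
    · simpa using ((hasDerivWithinAt_id x (Ici x)).sub_const b).const_mul (P b) |>.const_add (y b)
  have y1 : y 1 = y b + P b * (1 - b) := stepC 1 ⟨hb1, le_rfl⟩
  rw [y1, yb, Pb, hzdef, hwdef]
  ring

theorem determinant_symmetric_pulse
    (A s ℓ : ℝ) (hA : 0 < A) (hs0 : 0 < s) (hs1 : s < 1)
    (hℓ0 : 0 < ℓ) (hℓ : ℓ ≤ 2 * min s (1 - s))
    (y : ℝ → ℝ)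
    (hy0 : y 0 = 0)
    (hy : ∀ t ∈ Icc (0:ℝ) 1,
      HasDerivWithinAt y
        (1 + ∫ u in (0:ℝ)..t,
          (Icc (s - ℓ/2) (s + ℓ/2)).indicator (fun _ => A / ℓ) u * y u)
        (Icc (0:ℝ) 1) t) :
    y 1 = (1 - ℓ) * Real.cosh (Real.sqrt (A * ℓ))
        + A * ((s - s^2) + (1/A - 1/2) * ℓ + ℓ^2 / 4)
            * (Real.sinh (Real.sqrt (A * ℓ)) / Real.sqrt (A * ℓ)) := by
  have ha0 : 0 ≤ s - ℓ/2 := by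
    have := min_le_left s (1 - s); linarith
  have hb1 : s + ℓ/2 ≤ 1 := by
    have := min_le_right s (1 - s); linarith
  have hab : s - ℓ/2 < s + ℓ/2 := by linarith
  have hc : 0 < A/ℓ := div_pos hA hℓ0
  have hy' : ∀ t ∈ Icc (0:ℝ) 1,
      HasDerivWithinAt y
        (1 + ∫ u in (0:ℝ)..t,
          (Icc (s - ℓ/2) (s + ℓ/2)).indicator (fun u => (A/ℓ) * y u) u)
        (Icc (0:ℝ) 1) t := by
    intro t ht
    have heq : (∫ u in (0:ℝ)..t,
          (Icc (s - ℓ/2) (s + ℓ/2)).indicator (fun u => (A/ℓ) * y u) u)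
        = ∫ u in (0:ℝ)..t,
          (Icc (s - ℓ/2) (s + ℓ/2)).indicator (fun _ => A / ℓ) u * y u := by
      refine intervalIntegral.integral_congr fun u _ => ?_
      by_cases h : u ∈ Icc (s - ℓ/2) (s + ℓ/2) <;> simp [h]
    rw [heq]
    exact hy t ht
  have key := pulse_value (s - ℓ/2) (s + ℓ/2) (A/ℓ) ha0 hab hb1 hc y hy0 hy'
  set k := Real.sqrt (A/ℓ) with hkdef
  have hk : 0 < k := Real.sqrt_pos.mpr hc
  have hk2 : k * k = A/ℓ := Real.mul_self_sqrt hc.le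
  have hA' : A = k * k * ℓ := by
    rw [hk2]; field_simp
  have hKeq : Real.sqrt (A * ℓ) = k * ℓ := by
    rw [show A * ℓ = (A/ℓ) * ℓ^2 by field_simp, Real.sqrt_mul hc.le,
      Real.sqrt_sq hℓ0.le]
  have harg : s + ℓ/2 - (s - ℓ/2) = ℓ := by ring
  rw [key, harg, hKeq]
  have h1 : s - ℓ/2 + 1 - (s + ℓ/2) = 1 - ℓ := by ring
  have hcoef : 1/k + (s - ℓ/2)*(1 - (s + ℓ/2))*k
      = A * ((s - s^2) + (1/A - 1/2) * ℓ + ℓ^2 / 4) / (k * ℓ) := by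
    rw [hA']
    field_simp
    ring
  rw [h1, hcoef]
  ring
end

section
/- For A > 0, the function ℓ ↦ y(1/2, ℓ) defined by y(1/2,ℓ) = (1-ℓ) cosh(√(Aℓ)) + A[1/4 + (1/A - 1/2)ℓ + ℓ²/4] · sinh(√(Aℓ))/√(Aℓ), for 0 < ℓ < 1, has derivative (∂y/∂ℓ)(1/2,ℓ) = (A(ℓ-1)² - 4ℓ)(cosh√(Aℓ) - sinh(√(Aℓ))/√(Aℓ))/(8ℓ), and this derivative vanishes on (0,1) exactly at ℓ = A/(1+√(1+A))². -/
open Set Real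

/-!
With `s = √(Aℓ)` one has `ds/dℓ = s/(2ℓ)`, and after eliminating `A` through `s² = Aℓ` the
derivative factors as stated. The factor `cosh s - sinh s / s` is positive since
`sinh s < s cosh s`, so the derivative vanishes exactly when `A (ℓ - 1)² = 4ℓ`, a quadratic
whose only root in `(0, 1)` is `A / (1 + √(1 + A))²`.
-/

namespace Real

-- `x cosh x - sinh x` vanishes at `0` and has derivative `x sinh x > 0` for `x > 0`.
theorem sinh_lt_mul_cosh {x : ℝ} (hx : 0 < x) : sinh x < x * cosh x := by
  have hmono : StrictMonoOn (fun x : ℝ => x * cosh x - sinh x) (Ici 0) := by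
    refine strictMonoOn_of_deriv_pos (convex_Ici 0) (by fun_prop) fun y hy => ?_
    rw [interior_Ici] at hy
    have hderiv : HasDerivAt (fun x : ℝ => x * cosh x - sinh x)
        (1 * cosh y + y * sinh y - cosh y) y :=
      ((hasDerivAt_id y).mul (hasDerivAt_cosh y)).sub (hasDerivAt_sinh y)
    rw [hderiv.deriv]
    have := mul_pos (mem_Ioi.1 hy) (sinh_pos_iff.2 (mem_Ioi.1 hy))
    linarith
  simpa using hmono (mem_Ici.2 le_rfl) hx.le hx

theorem sinh_div_lt_cosh {x : ℝ} (hx : 0 < x) : sinh x / x < cosh x := by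
  rw [div_lt_iff₀ hx, mul_comm]
  exact sinh_lt_mul_cosh hx

end Real

section SqrtMul

variable {c x : ℝ}

theorem hasDerivAt_sqrt_const_mul (hcx : 0 < c * x) :
    HasDerivAt (fun l => √(c * l)) (√(c * x) / (2 * x)) x := by
  have hx : x ≠ 0 := by rintro rfl; simp at hcx
  have h := (hasDerivAt_sqrt hcx.ne').comp x ((hasDerivAt_id x).const_mul c)
  refine h.congr_deriv ?_
  have hs : √(c * x) ≠ 0 := (sqrt_pos.2 hcx).ne'
  field_simp
  exact (sq_sqrt hcx.le).symm

theorem hasDerivAt_cosh_sqrt_const_mul (hcx : 0 < c * x) :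
    HasDerivAt (fun l => cosh √(c * l)) (√(c * x) * sinh √(c * x) / (2 * x)) x := by
  refine (hasDerivAt_sqrt_const_mul hcx).cosh.congr_deriv ?_
  ring

theorem hasDerivAt_sinh_sqrt_const_mul_div (hcx : 0 < c * x) :
    HasDerivAt (fun l => sinh √(c * l) / √(c * l))
      ((cosh √(c * x) - sinh √(c * x) / √(c * x)) / (2 * x)) x := by
  have hs : √(c * x) ≠ 0 := (sqrt_pos.2 hcx).ne'
  have hx : x ≠ 0 := by rintro rfl; simp at hcx
  have hsqrt := hasDerivAt_sqrt_const_mul hcx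
  refine (hsqrt.sinh.div hsqrt hs).congr_deriv ?_
  field_simp

end SqrtMul

/-- With `t = √(1 + A)` the roots of `A (ℓ - 1)² = 4ℓ` are `(t - 1)/(t + 1) = A/(1 + t)²` and
its reciprocal, which exceeds `1`. -/
theorem mul_sub_one_sq_eq_four_mul_iff {A ℓ : ℝ} (hA : 0 < A) (hℓ : ℓ < 1) :
    A * (ℓ - 1) ^ 2 = 4 * ℓ ↔ ℓ = A / (1 + √(1 + A)) ^ 2 := by
  set t := √(1 + A)
  have ht2 : t ^ 2 = 1 + A := sq_sqrt (by linarith)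
  have ht1 : 1 < t := by
    rw [← sqrt_one]
    exact sqrt_lt_sqrt zero_le_one (by linarith)
  have hroot : A / (1 + t) ^ 2 = (t - 1) / (t + 1) := by
    rw [div_eq_div_iff (by positivity) (by positivity)]
    linear_combination (-(t + 1)) * ht2
  rw [hroot, eq_div_iff (by positivity)]
  constructor
  · intro h
    have hfactor : (ℓ * (t + 1) - (t - 1)) * (ℓ * (t - 1) - (t + 1)) = 0 := by
      linear_combination h + (ℓ - 1) ^ 2 * ht2
    rcases mul_eq_zero.1 hfactor with h | h
    · linarith
    · nlinarith
  · intro h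
    have hA : A = (t - 1) * (t + 1) := by linear_combination -ht2
    have ht : t + 1 ≠ 0 := by positivity
    rw [hA, eq_div_of_mul_eq ht h]
    field_simp
    ring

theorem derivative_of_pulse_value
    (A : ℝ) (hA : 0 < A) :
    ∀ ℓ ∈ Ioo (0:ℝ) 1,
      HasDerivAt
        (fun l : ℝ => (1 - l) * Real.cosh (Real.sqrt (A * l))
          + A * (1/4 + (1/A - 1/2) * l + l^2 / 4)
              * (Real.sinh (Real.sqrt (A * l)) / Real.sqrt (A * l)))
        ((A * (ℓ - 1)^2 - 4 * ℓ)
          * (Real.cosh (Real.sqrt (A * ℓ)) - Real.sinh (Real.sqrt (A * ℓ)) / Real.sqrt (A * ℓ))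
          / (8 * ℓ)) ℓ
      ∧ ((A * (ℓ - 1)^2 - 4 * ℓ)
          * (Real.cosh (Real.sqrt (A * ℓ)) - Real.sinh (Real.sqrt (A * ℓ)) / Real.sqrt (A * ℓ))
          / (8 * ℓ) = 0
        ↔ ℓ = A / (1 + Real.sqrt (1 + A))^2) := by
  rintro ℓ ⟨hℓ0, hℓ1⟩
  have hAℓ : 0 < A * ℓ := mul_pos hA hℓ0
  have hs : 0 < √(A * ℓ) := sqrt_pos.2 hAℓ
  have hs2 : √(A * ℓ) ^ 2 = A * ℓ := sq_sqrt hAℓ.le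
  have hgap : 0 < cosh √(A * ℓ) - sinh √(A * ℓ) / √(A * ℓ) := sub_pos.2 (sinh_div_lt_cosh hs)
  constructor
  · have hpoly := ((((hasDerivAt_id ℓ).const_mul (1/A - 1/2)).const_add (1/4 : ℝ)).add
      ((hasDerivAt_pow 2 ℓ).div_const 4)).const_mul A
    refine ((((hasDerivAt_id ℓ).const_sub 1).mul (hasDerivAt_cosh_sqrt_const_mul hAℓ)).add
      (hpoly.mul (hasDerivAt_sinh_sqrt_const_mul_div hAℓ))).congr_deriv ?_
    norm_num only [id, Pi.add_apply]
    field_simp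
    linear_combination 64 * (1 - ℓ) * sinh √(A * ℓ) * hs2
  · rw [div_eq_zero_iff, mul_eq_zero, sub_eq_zero, ← mul_sub_one_sq_eq_four_mul_iff hA hℓ1]
    simp [hgap.ne', hℓ0.ne']
end

section
/- For A > 0, setting ℓ(A) = A/(1+√(1+A))², the value y(1/2, ℓ(A)) = (1-ℓ(A)) cosh(√(Aℓ(A))) + A[1/4 + (1/A - 1/2)ℓ(A) + ℓ(A)²/4] · sinh(√(Aℓ(A)))/√(Aℓ(A)) equals (2/(1+√(1+A))) · exp(A/(1+√(1+A))). -/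
open Real

theorem optimal_value_closed_form
    (A : ℝ) (hA : 0 < A) :
    (1 - A / (1 + Real.sqrt (1 + A))^2)
        * Real.cosh (Real.sqrt (A * (A / (1 + Real.sqrt (1 + A))^2)))
      + A * (1/4 + (1/A - 1/2) * (A / (1 + Real.sqrt (1 + A))^2)
              + (A / (1 + Real.sqrt (1 + A))^2)^2 / 4)
          * (Real.sinh (Real.sqrt (A * (A / (1 + Real.sqrt (1 + A))^2)))
              / Real.sqrt (A * (A / (1 + Real.sqrt (1 + A))^2)))
    = (2 / (1 + Real.sqrt (1 + A))) * Real.exp (A / (1 + Real.sqrt (1 + A))) := by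
  set s := Real.sqrt (1 + A) with hsdef
  have h1A : (0:ℝ) < 1 + A := by linarith
  have hs2 : s ^ 2 = 1 + A := Real.sq_sqrt h1A.le
  have hs0 : 0 ≤ s := Real.sqrt_nonneg _
  have hs1 : 1 < s := by nlinarith
  have hAeq : A = (s - 1) * (s + 1) := by nlinarith
  have hden : (1 + s) ≠ 0 := by positivity
  have hne : s - 1 ≠ 0 := by intro h; nlinarith
  have hℓ : A / (1 + s) ^ 2 = (s - 1) / (s + 1) := by
    rw [hAeq]; field_simp; ring
  have hAℓ : A * (A / (1 + s) ^ 2) = (s - 1) ^ 2 := by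
    rw [hℓ, hAeq]; field_simp
  have hsqrt : Real.sqrt (A * (A / (1 + s) ^ 2)) = s - 1 := by
    rw [hAℓ]; exact Real.sqrt_sq (by linarith)
  have hA1s : A / (1 + s) = s - 1 := by
    rw [hAeq, add_comm 1 s]
    exact mul_div_cancel_right₀ _ (by intro h; nlinarith)
  rw [hsqrt, hℓ, hA1s, hAeq]
  obtain ⟨C, S, hC, hS⟩ : ∃ C S, Real.cosh (s - 1) = C ∧ Real.sinh (s - 1) = S :=
    ⟨_, _, rfl, rfl⟩
  have hE : Real.exp (s - 1) = C + S := by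
    rw [← hC, ← hS]; exact (Real.cosh_add_sinh _).symm
  rw [hC, hS, hE]
  have hAne : (s - 1) * (s + 1) ≠ 0 := by
    exact mul_ne_zero hne (by intro h; nlinarith)
  field_simp
  ring
end

section
/- Let (λₙ) be a sequence of positive reals and c > 0 with π²n² - c ≤ λₙ ≤ π²n² + c for all n ≥ 1. Then the heat trace φ(t) = Σ_{n=1}^∞ e^{-λₙ t} satisfies φ(t) = 1/(2√(πt)) - 1/2 + O(√t) as t → 0⁺. -/
open Set Real Filter Asymptotics

private lemma summable_exp_neg_sq {b : ℝ} (hb : 0 < b) :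
    Summable (fun n : ℕ => Real.exp (-b * (n : ℝ) ^ 2)) := by
  have hr1 : Real.exp (-b) < 1 := by
    simpa using Real.exp_lt_exp.mpr (neg_lt_zero.mpr hb)
  refine Summable.of_nonneg_of_le (fun n => (Real.exp_pos _).le) (fun n => ?_)
    (summable_geometric_of_lt_one (Real.exp_pos (-b)).le hr1)
  have : -b * (n : ℝ) ^ 2 = ((n ^ 2 : ℕ) : ℝ) * (-b) := by push_cast; ring
  rw [this, Real.exp_nat_mul]
  exact pow_le_pow_of_le_one (Real.exp_pos _).le hr1.le (Nat.le_self_pow two_ne_zero n)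

private lemma summable_exp_neg_sq' {b : ℝ} (hb : 0 < b) :
    Summable (fun n : ℕ => Real.exp (-b * ((n : ℝ) + 1) ^ 2)) := by
  have := (summable_nat_add_iff 1).mpr (summable_exp_neg_sq hb)
  simpa [Nat.cast_add] using this

private lemma tsum_int_sq {b : ℝ} (hb : 0 < b) :
    ∑' n : ℤ, Real.exp (-b * (n : ℝ) ^ 2)
      = 1 + 2 * ∑' n : ℕ, Real.exp (-b * ((n : ℝ) + 1) ^ 2) := by
  have h1 : Summable (fun n : ℕ => Real.exp (-b * (n : ℝ) ^ 2)) := summable_exp_neg_sq hb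
  have h2 : Summable (fun n : ℕ => Real.exp (-b * ((n : ℝ) + 1) ^ 2)) := summable_exp_neg_sq' hb
  have hf : Summable (fun n : ℤ => Real.exp (-b * (n : ℝ) ^ 2)) := by
    apply Summable.of_nat_of_neg_add_one
    · simpa using h1
    · exact h2.congr fun n => by congr 1; push_cast; ring
  rw [← tsum_nat_add_neg_add_one hf]
  have hcongr : ∀ n : ℕ,
      Real.exp (-b * ((n : ℤ) : ℝ) ^ 2) + Real.exp (-b * (((-((n : ℤ) + 1)) : ℤ) : ℝ) ^ 2)
        = Real.exp (-b * (n : ℝ) ^ 2) + Real.exp (-b * ((n : ℝ) + 1) ^ 2) := by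
    intro n; push_cast; ring_nf
  rw [tsum_congr hcongr, Summable.tsum_add h1 h2, Summable.tsum_eq_zero_add h1]
  push_cast
  simp [Real.exp_zero]
  ring

set_option maxHeartbeats 1000000 in
private lemma psi_eq {t : ℝ} (ht : 0 < t) :
    ∑' n : ℕ, Real.exp (-(π ^ 2 * ((n : ℝ) + 1) ^ 2) * t)
      = 1 / (2 * Real.sqrt (π * t)) - 1 / 2
        + (∑' n : ℕ, Real.exp (-(((n : ℝ) + 1) ^ 2 / t))) / Real.sqrt (π * t) := by
  have hπt : 0 < π * t := mul_pos Real.pi_pos ht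
  have key := Real.tsum_exp_neg_mul_int_sq hπt
  have hL : (∑' n : ℤ, Real.exp (-π * (π * t) * (n : ℝ) ^ 2))
      = 1 + 2 * ∑' n : ℕ, Real.exp (-(π ^ 2 * ((n : ℝ) + 1) ^ 2) * t) := by
    have := tsum_int_sq (b := π ^ 2 * t) (by positivity)
    rw [show (fun n : ℤ => Real.exp (-π * (π * t) * (n : ℝ) ^ 2))
        = fun n : ℤ => Real.exp (-(π ^ 2 * t) * (n : ℝ) ^ 2) from funext fun n => by ring_nf,
      this]
    congr 2
    exact tsum_congr fun n => by ring_nf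
  have hR : (∑' n : ℤ, Real.exp (-π / (π * t) * (n : ℝ) ^ 2))
      = 1 + 2 * ∑' n : ℕ, Real.exp (-(((n : ℝ) + 1) ^ 2 / t)) := by
    have := tsum_int_sq (b := 1 / t) (by positivity)
    rw [show (fun n : ℤ => Real.exp (-π / (π * t) * (n : ℝ) ^ 2))
        = fun n : ℤ => Real.exp (-(1 / t) * (n : ℝ) ^ 2) from funext fun n => by
          congr 1; field_simp,
      this]
    congr 2
    exact tsum_congr fun n => by congr 1; ring
  have hrpow : (π * t) ^ (1 / 2 : ℝ) = Real.sqrt (π * t) := (Real.sqrt_eq_rpow (π * t)).symm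
  rw [hL, hR, hrpow] at key
  have hs : 0 < Real.sqrt (π * t) := Real.sqrt_pos.mpr hπt
  set s := Real.sqrt (π * t) with hsdef
  set P := ∑' n : ℕ, Real.exp (-(π ^ 2 * ((n : ℝ) + 1) ^ 2) * t) with hP
  set T := ∑' n : ℕ, Real.exp (-(((n : ℝ) + 1) ^ 2 / t)) with hT
  have hexp : (1:ℝ)/s * (1 + 2*T) = 1/s + 2*(T/s) := by ring
  have h2s : (1:ℝ)/(2*s) = (1/s)/2 := by ring
  linarith [key, hexp]

set_option maxHeartbeats 2000000 in
theorem heat_trace_asymptotics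
    (lam : ℕ → ℝ) (c : ℝ) (hc : 0 < c)
    (hpos : ∀ n : ℕ, 0 < lam n)
    (hbound : ∀ n : ℕ, π^2 * (n + 1 : ℝ)^2 - c ≤ lam n ∧ lam n ≤ π^2 * (n + 1 : ℝ)^2 + c) :
    (fun t : ℝ => (∑' n : ℕ, Real.exp (-(lam n) * t))
        - (1 / (2 * Real.sqrt (π * t)) - 1/2))
      =O[nhdsWithin 0 (Ioi 0)] fun t : ℝ => Real.sqrt t := by
  rw [isBigO_iff]
  refine ⟨4 * c * Real.exp c + Real.exp 1, ?_⟩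
  filter_upwards [Ioc_mem_nhdsGT_of_mem (Set.left_mem_Ico.mpr one_pos)] with t htmem
  obtain ⟨ht, ht1⟩ := htmem
  have hπt : 0 < π * t := mul_pos Real.pi_pos ht
  have hs : 0 < Real.sqrt (π * t) := Real.sqrt_pos.mpr hπt
  have hψ_eq := psi_eq ht
  set s := Real.sqrt (π * t) with hsdef
  set T := ∑' n : ℕ, Real.exp (-(((n : ℝ) + 1) ^ 2 / t)) with hTdef
  -- summability facts
  have hψsum : Summable (fun n : ℕ => Real.exp (-(π ^ 2 * ((n : ℝ) + 1) ^ 2) * t)) := by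
    have := summable_exp_neg_sq' (b := π ^ 2 * t) (by positivity)
    exact this.congr fun n => by congr 1; ring
  set ψ := ∑' n : ℕ, Real.exp (-(π ^ 2 * ((n : ℝ) + 1) ^ 2) * t) with hψdef
  have hψ0 : 0 ≤ ψ := tsum_nonneg fun n => (Real.exp_pos _).le
  have hT0 : 0 ≤ T := tsum_nonneg fun n => (Real.exp_pos _).le
  have hφle : ∀ n : ℕ, Real.exp (-(lam n) * t)
      ≤ Real.exp c * Real.exp (-(π ^ 2 * ((n : ℝ) + 1) ^ 2) * t) := by
    intro n
    rw [← Real.exp_add]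
    apply Real.exp_le_exp.mpr
    nlinarith [mul_nonneg (sub_nonneg.2 (hbound n).1) ht.le,
      mul_le_of_le_one_right hc.le ht1]
  have hφsum : Summable (fun n : ℕ => Real.exp (-(lam n) * t)) :=
    Summable.of_nonneg_of_le (fun n => (Real.exp_pos _).le) hφle (hψsum.mul_left _)
  set Φ := ∑' n : ℕ, Real.exp (-(lam n) * t) with hΦdef
  -- termwise difference bound
  have habs : ∀ n : ℕ, |Real.exp (-(lam n) * t) - Real.exp (-(π ^ 2 * ((n : ℝ) + 1) ^ 2) * t)|
      ≤ (Real.exp (c * t) - 1) * Real.exp (-(π ^ 2 * ((n : ℝ) + 1) ^ 2) * t) := by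
    intro n
    have hb1 := (hbound n).1
    have hb2 := (hbound n).2
    have hup : Real.exp (-(lam n) * t)
        ≤ Real.exp (c * t) * Real.exp (-(π ^ 2 * ((n : ℝ) + 1) ^ 2) * t) := by
      rw [← Real.exp_add]
      apply Real.exp_le_exp.mpr
      nlinarith [mul_nonneg (sub_nonneg.2 hb1) ht.le]
    have hlo : Real.exp (-(c * t)) * Real.exp (-(π ^ 2 * ((n : ℝ) + 1) ^ 2) * t)
        ≤ Real.exp (-(lam n) * t) := by
      rw [← Real.exp_add]
      apply Real.exp_le_exp.mpr
      nlinarith [mul_nonneg (sub_nonneg.2 hb2) ht.le]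
    have hee : (0:ℝ) ≤ Real.exp (c * t) + Real.exp (-(c * t)) - 2 := by
      nlinarith [Real.add_one_le_exp (c * t), Real.add_one_le_exp (-(c * t))]
    have hepos := (Real.exp_pos (-(π ^ 2 * ((n : ℝ) + 1) ^ 2) * t)).le
    rw [abs_le]
    constructor
    · nlinarith [mul_nonneg hee hepos]
    · nlinarith
  have habs_sum : Summable (fun n : ℕ =>
      |Real.exp (-(lam n) * t) - Real.exp (-(π ^ 2 * ((n : ℝ) + 1) ^ 2) * t)|) :=
    Summable.of_nonneg_of_le (fun n => abs_nonneg _) habs (hψsum.mul_left _)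
  have hφψ : |Φ - ψ| ≤ (Real.exp (c * t) - 1) * ψ := by
    rw [hΦdef, hψdef, ← Summable.tsum_sub hφsum hψsum]
    calc |∑' n : ℕ, (Real.exp (-(lam n) * t) - Real.exp (-(π ^ 2 * ((n : ℝ) + 1) ^ 2) * t))|
        ≤ ∑' n : ℕ, |Real.exp (-(lam n) * t) - Real.exp (-(π ^ 2 * ((n : ℝ) + 1) ^ 2) * t)| := by
          have hns : Summable fun n : ℕ =>
              ‖Real.exp (-(lam n) * t) - Real.exp (-(π ^ 2 * ((n : ℝ) + 1) ^ 2) * t)‖ := by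
            simpa only [Real.norm_eq_abs] using habs_sum
          simpa only [Real.norm_eq_abs] using norm_tsum_le_tsum_norm hns
      _ ≤ ∑' n : ℕ, (Real.exp (c * t) - 1) * Real.exp (-(π ^ 2 * ((n : ℝ) + 1) ^ 2) * t) :=
          Summable.tsum_le_tsum habs habs_sum (hψsum.mul_left _)
      _ = (Real.exp (c * t) - 1) * ψ := tsum_mul_left
  -- bound on T
  have hu : (1:ℝ) ≤ t⁻¹ := (one_le_inv₀ ht).mpr ht1
  have hTsum : Summable (fun n : ℕ => Real.exp (-(((n : ℝ) + 1) ^ 2 / t))) := by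
    have := summable_exp_neg_sq' (b := 1 / t) (by positivity)
    exact this.congr fun n => by congr 1; ring
  have hr1 : Real.exp (-1 : ℝ) < 1 := by
    simpa using Real.exp_lt_exp.mpr (by norm_num : (-1:ℝ) < 0)
  have hGsum : Summable (fun n : ℕ => Real.exp (-((n : ℝ) + 1))) := by
    have hg := (summable_nat_add_iff 1).mpr
      (summable_geometric_of_lt_one (Real.exp_pos (-1:ℝ)).le hr1)
    exact hg.congr fun n => by rw [← Real.exp_nat_mul]; congr 1; push_cast; ring
  have hGle : (∑' n : ℕ, Real.exp (-((n : ℝ) + 1))) ≤ 1 := by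
    have hrw : (∑' n : ℕ, Real.exp (-((n : ℝ) + 1)))
        = Real.exp (-1 : ℝ) * ∑' n : ℕ, Real.exp (-1 : ℝ) ^ n := by
      rw [← tsum_mul_left]
      refine tsum_congr fun n => ?_
      rw [← Real.exp_nat_mul, ← Real.exp_add]
      congr 1; push_cast; ring
    rw [hrw, tsum_geometric_of_lt_one (Real.exp_pos _).le hr1]
    have h21 : (2:ℝ) ≤ Real.exp 1 := by nlinarith [Real.add_one_le_exp (1:ℝ)]
    have h2 : Real.exp (-1 : ℝ) ≤ 1/2 := by
      rw [Real.exp_neg]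
      rw [inv_le_comm₀ (Real.exp_pos 1) (by norm_num)]
      norm_num
      linarith
    have hb : 0 < 1 - Real.exp (-1 : ℝ) := by linarith
    have hbi : (0:ℝ) ≤ (1 - Real.exp (-1 : ℝ))⁻¹ := (inv_pos.2 hb).le
    nlinarith [mul_inv_cancel₀ hb.ne', mul_nonneg (by linarith : (0:ℝ) ≤ 1 - 2 * Real.exp (-1:ℝ)) hbi]
  have hterm : ∀ n : ℕ, Real.exp (-(((n : ℝ) + 1) ^ 2 / t))
      ≤ Real.exp (1 - t⁻¹) * Real.exp (-((n : ℝ) + 1)) := by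
    intro n
    rw [← Real.exp_add]
    apply Real.exp_le_exp.mpr
    rw [div_eq_mul_inv]
    have hn : (0:ℝ) ≤ (n : ℝ) := Nat.cast_nonneg n
    have h1 : (0:ℝ) ≤ ((n : ℝ) + 2) * t⁻¹ - 1 := by nlinarith [mul_nonneg hn (by linarith : (0:ℝ) ≤ t⁻¹)]
    nlinarith [mul_nonneg hn h1]
  have hexpinv : Real.exp (-t⁻¹) ≤ t := by
    rw [Real.exp_neg]
    have h1 : t⁻¹ ≤ Real.exp t⁻¹ := by nlinarith [Real.add_one_le_exp t⁻¹]
    have h2 := inv_anti₀ (inv_pos.2 ht) h1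
    simpa using h2
  have hTle : T ≤ Real.exp 1 * t := by
    calc T ≤ ∑' n : ℕ, Real.exp (1 - t⁻¹) * Real.exp (-((n : ℝ) + 1)) :=
        Summable.tsum_le_tsum hterm hTsum (hGsum.mul_left _)
      _ = Real.exp (1 - t⁻¹) * ∑' n : ℕ, Real.exp (-((n : ℝ) + 1)) := tsum_mul_left
      _ ≤ Real.exp (1 - t⁻¹) * 1 := mul_le_mul_of_nonneg_left hGle (Real.exp_pos _).le
      _ = Real.exp 1 * Real.exp (-t⁻¹) := by rw [mul_one, ← Real.exp_add]; ring_nf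
      _ ≤ Real.exp 1 * t := mul_le_mul_of_nonneg_left hexpinv (Real.exp_pos _).le
  -- t/s ≤ sqrt t
  have hst : Real.sqrt t ≤ s := by
    rw [hsdef]
    apply Real.sqrt_le_sqrt
    nlinarith [Real.pi_gt_three]
  have hsqt : 0 < Real.sqrt t := Real.sqrt_pos.mpr ht
  have hts : t / s ≤ Real.sqrt t := by
    calc t / s ≤ t / Real.sqrt t := div_le_div_of_nonneg_left ht.le hsqt hst
      _ = Real.sqrt t := Real.div_sqrt
  have hTs : T / s ≤ Real.exp 1 * Real.sqrt t := by
    calc T / s ≤ (Real.exp 1 * t) / s := by gcongr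
      _ = Real.exp 1 * (t / s) := by ring
      _ ≤ Real.exp 1 * Real.sqrt t := mul_le_mul_of_nonneg_left hts (Real.exp_pos _).le
  have hTs0 : 0 ≤ T / s := div_nonneg hT0 hs.le
  -- e^{ct} - 1 ≤ c e^c t
  have hEct : Real.exp (c * t) - 1 ≤ c * Real.exp c * t := by
    have hct : 0 ≤ c * t := mul_nonneg hc.le ht.le
    have h1 : 1 - Real.exp (-(c * t)) ≤ c * t := by nlinarith [Real.add_one_le_exp (-(c * t))]
    have h1' : 0 ≤ 1 - Real.exp (-(c * t)) := by
      have hle1 : Real.exp (-(c * t)) ≤ 1 := by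
        simpa using Real.exp_le_exp.mpr (neg_nonpos.mpr hct)
      linarith
    have hect : Real.exp (c * t) ≤ Real.exp c :=
      Real.exp_le_exp.mpr (by nlinarith)
    have hrw : Real.exp (c * t) - 1 = Real.exp (c * t) * (1 - Real.exp (-(c * t))) := by
      rw [mul_sub, mul_one, ← Real.exp_add]; simp
    rw [hrw]
    calc Real.exp (c * t) * (1 - Real.exp (-(c * t)))
        ≤ Real.exp c * (c * t) := mul_le_mul hect h1 h1' (Real.exp_pos _).le
      _ = c * Real.exp c * t := by ring
  -- assemble
  have hψle : ψ ≤ 1 / (2 * s) + T / s := by rw [hψ_eq]; linarith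
  have htψ : t * ψ ≤ Real.sqrt t / 2 + Real.exp 1 * Real.sqrt t := by
    have hA : t * ψ ≤ t * (1 / (2 * s)) + t * (T / s) := by nlinarith [hψle, ht.le]
    have hB : t * (1 / (2 * s)) ≤ Real.sqrt t / 2 := by
      have hrw : t * (1 / (2 * s)) = (t / s) / 2 := by ring
      rw [hrw]; linarith
    have hC : t * (T / s) ≤ Real.exp 1 * Real.sqrt t := by
      calc t * (T / s) ≤ 1 * (T / s) := mul_le_mul_of_nonneg_right ht1 hTs0
        _ = T / s := one_mul _
        _ ≤ Real.exp 1 * Real.sqrt t := hTs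
    linarith
  have hΦψ2 : |Φ - ψ| ≤ c * Real.exp c * (t * ψ) := by
    calc |Φ - ψ| ≤ (Real.exp (c * t) - 1) * ψ := hφψ
      _ ≤ (c * Real.exp c * t) * ψ := mul_le_mul_of_nonneg_right hEct hψ0
      _ = c * Real.exp c * (t * ψ) := by ring
  have hsplit : Φ - (1 / (2 * s) - 1/2) = (Φ - ψ) + T / s := by rw [hψ_eq]; ring
  rw [Real.norm_eq_abs, Real.norm_eq_abs, abs_of_nonneg (Real.sqrt_nonneg t)]
  have habs2 : |Φ - (1 / (2 * s) - 1/2)| ≤ |Φ - ψ| + T / s := by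
    rw [hsplit]
    calc |(Φ - ψ) + T / s| ≤ |Φ - ψ| + |T / s| := abs_add_le _ _
      _ = |Φ - ψ| + T / s := by rw [abs_of_nonneg hTs0]
  have hcec : (0:ℝ) ≤ c * Real.exp c * Real.sqrt t :=
    mul_nonneg (mul_nonneg hc.le (Real.exp_pos c).le) (Real.sqrt_nonneg t)
  have he3 : Real.exp 1 < 3 := lt_trans Real.exp_one_lt_d9 (by norm_num)
  have hfin : c * Real.exp c * (t * ψ) + T / s
      ≤ (4 * c * Real.exp c + Real.exp 1) * Real.sqrt t := by
    have h1 : c * Real.exp c * (t * ψ) ≤ c * Real.exp c * (Real.sqrt t / 2 + Real.exp 1 * Real.sqrt t) :=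
      mul_le_mul_of_nonneg_left htψ (mul_nonneg hc.le (Real.exp_pos c).le)
    nlinarith [mul_nonneg hcec (by linarith : (0:ℝ) ≤ 7/2 - Real.exp 1), hTs]
  linarith [habs2, hΦψ2, hfin]
end

section
/- Fix q > 1, A > 0, let α = q/(q-1) and c = (1/2)(A(4q-2)/q)^q. For H > c define g(H) = (H - c)² - (2α/(α+1))·(2H)^{1+1/α}. Then g has exactly one zero in the interval (c, ∞). -/
open Set Real Filter

private lemma aux_unique_zero (c p K : ℝ) (hc : 0 < c) (hp0 : 0 < p/2) (hp2 : p/2 < 1)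
    (hK : 0 < K) :
    ∃! H : ℝ, H ∈ Ioi c ∧ (H - c)^2 - K * (2*H) ^ p = 0 := by
  set r : ℝ → ℝ := fun H => (H - c) / (2*H) ^ (p/2) with hr
  -- strict monotonicity on Ici c
  have hmono : StrictMonoOn r (Ici c) := by
    intro H1 h1 H2 h2 hlt
    have hc1 : c ≤ H1 := h1
    have hH1 : (0:ℝ) < 2*H1 := by linarith
    have hH2 : (0:ℝ) < 2*H2 := by linarith
    have ha : 0 < (2*H1)^(p/2) := Real.rpow_pos_of_pos hH1 _
    have hb : 0 < (2*H2)^(p/2) := Real.rpow_pos_of_pos hH2 _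
    have hab : (2*H1)^(p/2) < (2*H2)^(p/2) :=
      Real.rpow_lt_rpow hH1.le (by linarith) hp0
    have hu : (2*H1)^(1-p/2) < (2*H2)^(1-p/2) :=
      Real.rpow_lt_rpow hH1.le (by linarith) (by linarith)
    have q1 : H1 / (2*H1)^(p/2) = (1/2) * (2*H1)^(1-p/2) := by
      rw [Real.rpow_sub hH1, Real.rpow_one]; ring
    have q2 : H2 / (2*H2)^(p/2) = (1/2) * (2*H2)^(1-p/2) := by
      rw [Real.rpow_sub hH2, Real.rpow_one]; ring
    have key : H1 / (2*H1)^(p/2) < H2 / (2*H2)^(p/2) := by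
      rw [q1, q2]; linarith
    have hcc : c / (2*H2)^(p/2) < c / (2*H1)^(p/2) :=
      div_lt_div_of_pos_left hc ha hab
    show (H1 - c) / (2*H1)^(p/2) < (H2 - c) / (2*H2)^(p/2)
    rw [sub_div, sub_div]
    linarith
  -- continuity on Ici c
  have hcont : ContinuousOn r (Ici c) := by
    apply ContinuousOn.div
    · fun_prop
    · apply ContinuousOn.rpow_const (by fun_prop)
      intro x _; right; linarith
    · intro x hx
      have hx' : c ≤ x := hx
      exact ne_of_gt (Real.rpow_pos_of_pos (by linarith) _)
  -- tendsto atTop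
  have ht : Tendsto r atTop atTop := by
    have h1 : Tendsto (fun H : ℝ => (H - c)/(2*H)) atTop (nhds (1/2)) := by
      have h0 : Tendsto (fun H : ℝ => 1/2 - c/2 * H⁻¹) atTop (nhds (1/2 - c/2 * 0)) :=
        tendsto_const_nhds.sub (tendsto_inv_atTop_zero.const_mul _)
      rw [mul_zero, sub_zero] at h0
      apply h0.congr'
      filter_upwards [eventually_gt_atTop (0:ℝ)] with H hH
      field_simp
    have h2 : Tendsto (fun H : ℝ => (2*H)^(1-p/2)) atTop atTop :=
      (tendsto_rpow_atTop (by linarith)).comp (tendsto_id.const_mul_atTop two_pos)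
    have h3 := h1.pos_mul_atTop (by norm_num) h2
    apply h3.congr'
    filter_upwards [eventually_gt_atTop (0:ℝ)] with H hH
    have hH0 : (0:ℝ) < 2*H := by linarith
    have hd : 0 < (2*H)^(p/2) := Real.rpow_pos_of_pos hH0 _
    rw [Real.rpow_sub hH0, Real.rpow_one]
    field_simp
    simp only [hr]
    rw [mul_comm H 2]; field_simp
  set s := Real.sqrt K with hs'
  have hs : 0 < s := Real.sqrt_pos.mpr hK
  obtain ⟨M, hMs, hMc⟩ := ((ht.eventually_ge_atTop s).and (eventually_gt_atTop c)).exists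
  have hrc : r c = 0 := by simp [hr]
  have hsub : Icc c M ⊆ Ici c := Icc_subset_Ici_self
  have hivt := intermediate_value_Icc hMc.le (hcont.mono hsub)
  have hsmem : s ∈ Icc (r c) (r M) := by rw [hrc]; exact ⟨hs.le, hMs⟩
  obtain ⟨H, hHmem, hHval⟩ := hivt hsmem
  have hHc : c < H := by
    rcases lt_or_eq_of_le hHmem.1 with h | h
    · exact h
    · exfalso; rw [← h, hrc] at hHval; linarith
  -- equivalence
  have equiv : ∀ H ∈ Ioi c, ((H - c)^2 - K * (2*H)^p = 0 ↔ r H = s) := by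
    intro H hH
    have hHgt : c < H := hH
    have hH0 : (0:ℝ) < 2*H := by linarith
    have hd : 0 < (2*H)^(p/2) := Real.rpow_pos_of_pos hH0 _
    have hdp : 0 < (2*H)^p := Real.rpow_pos_of_pos hH0 _
    have hsq : (2*H)^(p/2) * (2*H)^(p/2) = (2*H)^p := by
      rw [← Real.rpow_add hH0]; ring_nf
    have hrp : (r H)^2 = (H-c)^2 / (2*H)^p := by
      simp only [hr, div_pow]
      congr 1
      rw [sq, hsq]
    constructor
    · intro h
      have h1 : (r H)^2 = K := by
        rw [hrp, div_eq_iff (ne_of_gt hdp)]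
        linarith
      have h2 : 0 ≤ r H := div_nonneg (by linarith) hd.le
      rw [← Real.sqrt_sq h2, h1]
    · intro h
      have h1 : (r H)^2 = K := by rw [h, hs']; exact Real.sq_sqrt hK.le
      rw [hrp] at h1
      have h2 := (div_eq_iff (ne_of_gt hdp)).mp h1
      linarith
  refine ⟨H, ⟨hHc, (equiv H hHc).mpr hHval⟩, ?_⟩
  rintro H' ⟨hH'c, hH'val⟩
  have hH's : r H' = s := (equiv H' hH'c).mp hH'val
  exact hmono.injOn (Ioi_subset_Ici_self hH'c) (Ioi_subset_Ici_self hHc) (hH's.trans hHval.symm)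

theorem unique_zero_of_g
    (q A α c : ℝ) (hq : 1 < q) (hA : 0 < A)
    (hα : α = q / (q - 1))
    (hc : c = (1/2) * (A * (4*q - 2) / q) ^ q) :
    ∃! H : ℝ, H ∈ Ioi c ∧
      (H - c)^2 - (2*α / (α + 1)) * (2*H) ^ (1 + 1/α) = 0 := by
  have hq0 : (0:ℝ) < q := by linarith
  have hα1 : 1 < α := by
    rw [hα, lt_div_iff₀ (by linarith)]; linarith
  have hbase : 0 < A * (4*q - 2) / q :=
    div_pos (mul_pos hA (by linarith)) hq0
  have hc0 : 0 < c := by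
    rw [hc]
    have := Real.rpow_pos_of_pos hbase q
    linarith
  have hαpos : (0:ℝ) < α := by linarith
  have hinv : 0 < 1/α := by positivity
  have hinv1 : 1/α < 1 := by
    rw [div_lt_one hαpos]; linarith
  exact aux_unique_zero c (1 + 1/α) (2*α / (α + 1)) hc0 (by linarith) (by linarith)
    (by apply div_pos <;> linarith)
end

section
/- For A > 0, the polynomial P(H) = 128H³ - 9(H - 9A²/2)⁴ has exactly one root in the interval (9A²/2, ∞). -/
/-!
On `(c, ∞)` with `c ≥ 0`, the equation `a H³ = b (H - c)⁴` says `(H - c)⁴ / H³ = a / b`, and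
`(H - c)⁴ / H³ = (1 - c / H)³ (H - c)` is strictly increasing there, so there is at most one root.
A root exists by the intermediate value theorem: `a H³ - b (H - c)⁴` is positive slightly to the
right of `c` and negative for large `H`.
-/

open Set

section

variable {a b c : ℝ}

theorem strictMonoOn_sub_pow_four_div_pow_three (hc : 0 ≤ c) :
    StrictMonoOn (fun H : ℝ => (H - c) ^ 4 / H ^ 3) (Ioi c) := by
  intro x (hx : c < x) y (hy : c < y) hxy
  have factor : ∀ H : ℝ, 0 < H → (H - c) ^ 4 / H ^ 3 = (1 - c / H) ^ 3 * (H - c) :=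
    fun H hH => by field_simp
  have hx0 : 0 < x := hc.trans_lt hx
  have hy0 : 0 < y := hc.trans_lt hy
  have hcx : 0 ≤ 1 - c / x := by rw [sub_nonneg, div_le_one hx0]; exact hx.le
  have hcy : 0 < 1 - c / y := by rwa [sub_pos, div_lt_one hy0]
  have hcxy : (1 - c / x) ^ 3 ≤ (1 - c / y) ^ 3 := by gcongr
  simp only [factor x hx0, factor y hy0]
  exact mul_lt_mul_of_le_of_lt_of_nonneg_of_pos hcxy (by linarith) (by linarith) (by positivity)

theorem sub_pow_four_div_pow_three_eq_iff (hb : 0 < b) (hc : 0 ≤ c) {H : ℝ} (hH : c < H) :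
    (H - c) ^ 4 / H ^ 3 = a / b ↔ a * H ^ 3 - b * (H - c) ^ 4 = 0 := by
  have hH0 : 0 < H := hc.trans_lt hH
  rw [div_eq_div_iff (by positivity) hb.ne', sub_eq_zero]
  constructor <;> intro h <;> linarith

theorem exists_root_Ioi (ha : 0 < a) (hb : 0 < b) (hc : 0 ≤ c) :
    ∃ H ∈ Ioi c, a * H ^ 3 - b * (H - c) ^ 4 = 0 := by
  -- `a (c + t)³ - b t⁴ ≥ t³ (a - b t) = a t³ / 2`, and since `R - c ≥ R / 2`,
  -- `b (R - c)⁴ ≥ (b R / 16) R³ ≥ 2 a R³`.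
  set t := a / (2 * b)
  set R := 2 * c + 32 * a / b
  have ht : 0 < t := by positivity
  have hbt : b * t = a / 2 := by simp only [t]; field_simp
  have hbR : 32 * a ≤ b * R := by simp only [R]; field_simp; nlinarith
  have hcR : 2 * c ≤ R := by simp only [R]; linarith [show 0 < 32 * a / b by positivity]
  have hR : 0 < R := by positivity
  have hLR : c + t ≤ R := by
    have htR : t ≤ 32 * a / b := by simp only [t]; gcongr <;> linarith
    linarith
  have pos_near_c : 0 < a * (c + t) ^ 3 - b * (c + t - c) ^ 4 := by
    have hpow : t ^ 3 ≤ (c + t) ^ 3 := by gcongr; linarith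
    have hbt4 : b * t ^ 4 = a / 2 * t ^ 3 := by rw [← hbt]; ring
    rw [add_sub_cancel_left]
    nlinarith [pow_pos ht 3, hpow, hbt4]
  have neg_far : a * R ^ 3 - b * (R - c) ^ 4 < 0 := by
    have hpow : b * (R / 2) ^ 4 ≤ b * (R - c) ^ 4 := by gcongr; linarith
    nlinarith [pow_pos hR 3, hpow]
  obtain ⟨H, hH, hfH⟩ := intermediate_value_Icc' hLR
    (f := fun H => a * H ^ 3 - b * (H - c) ^ 4) (by fun_prop) ⟨neg_far.le, pos_near_c.le⟩
  exact ⟨H, show c < H by linarith [hH.1], hfH⟩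

theorem existsUnique_root_Ioi (ha : 0 < a) (hb : 0 < b) (hc : 0 ≤ c) :
    ∃! H : ℝ, H ∈ Ioi c ∧ a * H ^ 3 - b * (H - c) ^ 4 = 0 := by
  obtain ⟨H, hH, hroot⟩ := exists_root_Ioi ha hb hc
  refine ⟨H, ⟨hH, hroot⟩, fun K ⟨hK, hKroot⟩ => ?_⟩
  refine (strictMonoOn_sub_pow_four_div_pow_three hc).injOn hK hH ?_
  rw [sub_pow_four_div_pow_three_eq_iff hb hc hK |>.mpr hKroot,
    sub_pow_four_div_pow_three_eq_iff hb hc hH |>.mpr hroot]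

end

theorem unique_root_discriminant_general
    (A : ℝ) :
    ∃! H : ℝ, H ∈ Ioi (9 * A^2 / 2) ∧
      128 * H^3 - 9 * (H - 9 * A^2 / 2)^4 = 0 :=
  existsUnique_root_Ioi (by norm_num) (by norm_num) (by positivity)

theorem unique_root_discriminant
    (A : ℝ) (hA : 0 < A) :
    ∃! H : ℝ, H ∈ Ioi (9 * A^2 / 2) ∧
      128 * H^3 - 9 * (H - 9 * A^2 / 2)^4 = 0 :=
  unique_root_discriminant_general A
end

section
/- Let α > 1 and let Ψ : [0,1] → ℝ be a C² function with Ψ > 0 on (0,1) satisfying Ψ'' = Ψ^α - 2H for some constant H. Let Φ solve the linearized equation Φ'' = αΨ^{α-1}Φ - 2 with Φ(0)=0, Φ'(0)=1. Then Φ(t) > t(1-t) for all t ∈ (0,1]; in particular Φ(1) > 0. -/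
open Set Real

/-- Key step: if `Φ > 0` on `(0,b)` with `b ∈ (0,1]`, then `Φ b > b(1-b)`. -/
lemma lfp_key
    (α : ℝ) (hα : 1 < α)
    (Ψ Φ Φ' : ℝ → ℝ)
    (hΨpos : ∀ t ∈ Ioo (0:ℝ) 1, 0 < Ψ t)
    (hΦ0 : Φ 0 = 0) (hΦ'0 : Φ' 0 = 1)
    (hΦd : ∀ t ∈ Icc (0:ℝ) 1, HasDerivWithinAt Φ (Φ' t) (Icc (0:ℝ) 1) t)
    (hΦdd : ∀ t ∈ Icc (0:ℝ) 1,
      HasDerivWithinAt Φ' (α * Ψ t ^ (α - 1) * Φ t - 2) (Icc (0:ℝ) 1) t)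
    (b : ℝ) (hb : b ∈ Ioc (0:ℝ) 1)
    (hpos : ∀ s ∈ Ioo (0:ℝ) b, 0 < Φ s) :
    b * (1 - b) < Φ b := by
  obtain ⟨hb0, hb1⟩ := hb
  have hsub : Icc (0:ℝ) b ⊆ Icc (0:ℝ) 1 := Icc_subset_Icc le_rfl hb1
  set G : ℝ → ℝ := fun t => Φ t - t * (1 - t) with hG
  set G' : ℝ → ℝ := fun t => Φ' t - (1 - 2 * t) with hG'
  have hΦcont : ContinuousOn Φ (Icc (0:ℝ) 1) :=
    fun t ht => (hΦd t ht).continuousWithinAt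
  have hΦ'cont : ContinuousOn Φ' (Icc (0:ℝ) 1) :=
    fun t ht => (hΦdd t ht).continuousWithinAt
  have hpoly : ∀ t : ℝ, HasDerivAt (fun t : ℝ => t * (1 - t)) (1 - 2 * t) t := by
    intro t
    have h := (hasDerivAt_id t).mul ((hasDerivAt_const t (1:ℝ)).sub (hasDerivAt_id t))
    refine h.congr_deriv ?_
    simp [id]; ring
  have hGd : ∀ t ∈ Icc (0:ℝ) 1, HasDerivWithinAt G (G' t) (Icc (0:ℝ) 1) t := by
    intro t ht
    exact (hΦd t ht).sub ((hpoly t).hasDerivWithinAt)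
  have hG'd : ∀ t ∈ Icc (0:ℝ) 1,
      HasDerivWithinAt G' (α * Ψ t ^ (α - 1) * Φ t) (Icc (0:ℝ) 1) t := by
    intro t ht
    have h2 : HasDerivAt (fun t : ℝ => 1 - 2 * t) (-2 : ℝ) t := by
      have h := (hasDerivAt_const t (1:ℝ)).sub ((hasDerivAt_id t).const_mul 2)
      refine h.congr_deriv ?_; ring
    have := (hΦdd t ht).sub h2.hasDerivWithinAt
    refine this.congr_deriv ?_; ring
  have hGcont : ContinuousOn G (Icc (0:ℝ) 1) :=
    hΦcont.sub (by fun_prop)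
  have hG'cont : ContinuousOn G' (Icc (0:ℝ) 1) :=
    hΦ'cont.sub (by fun_prop)
  -- derivatives at interior points
  have hderivAt : ∀ s ∈ Ioo (0:ℝ) 1,
      HasDerivAt G' (α * Ψ s ^ (α - 1) * Φ s) s := by
    intro s hs
    exact (hG'd s (Ioo_subset_Icc_self hs)).hasDerivAt
      (Icc_mem_nhds hs.1 hs.2)
  have hGderivAt : ∀ s ∈ Ioo (0:ℝ) 1, HasDerivAt G (G' s) s := by
    intro s hs
    exact (hGd s (Ioo_subset_Icc_self hs)).hasDerivAt (Icc_mem_nhds hs.1 hs.2)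
  -- G' is strictly monotone on [0,b]
  have hG'mono : StrictMonoOn G' (Icc 0 b) := by
    apply strictMonoOn_of_deriv_pos (convex_Icc 0 b) (hG'cont.mono hsub)
    intro s hs
    rw [interior_Icc] at hs
    have hs1 : s ∈ Ioo (0:ℝ) 1 := ⟨hs.1, lt_of_lt_of_le hs.2 hb1⟩
    rw [(hderivAt s hs1).deriv]
    have h1 : 0 < Ψ s ^ (α - 1) := Real.rpow_pos_of_pos (hΨpos s hs1) _
    have h2 : 0 < Φ s := hpos s hs
    positivity
  have hG'0 : G' 0 = 0 := by simp [hG', hΦ'0]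
  have hG'pos : ∀ s ∈ Ioo (0:ℝ) b, 0 < G' s := by
    intro s hs
    have := hG'mono (left_mem_Icc.2 hb0.le) (Ioo_subset_Icc_self hs) hs.1
    rwa [hG'0] at this
  -- G is strictly monotone on [0,b]
  have hGmono : StrictMonoOn G (Icc 0 b) := by
    apply strictMonoOn_of_deriv_pos (convex_Icc 0 b) (hGcont.mono hsub)
    intro s hs
    rw [interior_Icc] at hs
    have hs1 : s ∈ Ioo (0:ℝ) 1 := ⟨hs.1, lt_of_lt_of_le hs.2 hb1⟩
    rw [(hGderivAt s hs1).deriv]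
    exact hG'pos s hs
  have hG0 : G 0 = 0 := by simp [hG, hΦ0]
  have := hGmono (left_mem_Icc.2 hb0.le) (right_mem_Icc.2 hb0.le) hb0
  rw [hG0] at this
  simpa [hG, sub_pos] using this

theorem linearized_flow_positive
    (α H : ℝ) (hα : 1 < α)
    (Ψ Ψ' Φ Φ' : ℝ → ℝ)
    (hΨpos : ∀ t ∈ Ioo (0:ℝ) 1, 0 < Ψ t)
    (hΨd : ∀ t ∈ Icc (0:ℝ) 1, HasDerivWithinAt Ψ (Ψ' t) (Icc (0:ℝ) 1) t)
    (hΨdd : ∀ t ∈ Icc (0:ℝ) 1,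
      HasDerivWithinAt Ψ' (Ψ t ^ α - 2 * H) (Icc (0:ℝ) 1) t)
    (hΦ0 : Φ 0 = 0) (hΦ'0 : Φ' 0 = 1)
    (hΦd : ∀ t ∈ Icc (0:ℝ) 1, HasDerivWithinAt Φ (Φ' t) (Icc (0:ℝ) 1) t)
    (hΦdd : ∀ t ∈ Icc (0:ℝ) 1,
      HasDerivWithinAt Φ' (α * Ψ t ^ (α - 1) * Φ t - 2) (Icc (0:ℝ) 1) t) :
    ∀ t ∈ Ioc (0:ℝ) 1, t * (1 - t) < Φ t := by
  have hΦcont : ContinuousOn Φ (Icc (0:ℝ) 1) :=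
    fun t ht => (hΦd t ht).continuousWithinAt
  -- Φ is positive near 0
  have h0mem : (0:ℝ) ∈ Icc (0:ℝ) 1 := ⟨le_rfl, zero_le_one⟩
  have hslope : Filter.Tendsto (slope Φ 0) (nhdsWithin 0 (Icc (0:ℝ) 1 \ {0})) (nhds 1) := by
    have h := hΦd 0 h0mem
    rw [hΦ'0] at h
    rwa [hasDerivWithinAt_iff_tendsto_slope] at h
  have hev : ∀ᶠ t in nhdsWithin 0 (Icc (0:ℝ) 1 \ {0}), 0 < slope Φ 0 t :=
    hslope.eventually (eventually_gt_nhds one_pos)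
  obtain ⟨ε, hε, hεball⟩ := Metric.mem_nhdsWithin_iff.mp hev
  have hnear : ∀ t : ℝ, 0 < t → t < ε → t ≤ 1 → 0 < Φ t := by
    intro t ht0 htε ht1
    have hmem : t ∈ Icc (0:ℝ) 1 \ {0} := ⟨⟨ht0.le, ht1⟩, by simp [ne_of_gt ht0]⟩
    have hdist : dist t 0 < ε := by
      rw [Real.dist_eq, sub_zero, abs_of_pos ht0]; exact htε
    have hsl : 0 < slope Φ 0 t := hεball ⟨Metric.mem_ball.2 hdist, hmem⟩
    rw [slope_def_field, hΦ0, sub_zero, sub_zero] at hsl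
    rcases div_pos_iff.mp hsl with h | h
    · exact h.1
    · exact absurd ht0 (not_lt.2 h.2.le)
  -- Φ > 0 on (0,1]
  have hΦpos : ∀ t ∈ Ioc (0:ℝ) 1, 0 < Φ t := by
    by_contra hcon
    push_neg at hcon
    obtain ⟨t₀, ht₀, ht₀le⟩ := hcon
    have hεle : ∀ s : ℝ, 0 < s → s ≤ 1 → Φ s ≤ 0 → ε ≤ s := by
      intro s hs0 hs1 hsle
      by_contra h
      push_neg at h
      exact absurd hsle (not_le.2 (hnear s hs0 h hs1))
    set S : Set ℝ := {t ∈ Icc (min ε 1) 1 | Φ t ≤ 0} with hS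
    have hε1 : min ε 1 ≤ t₀ := (min_le_left ε 1).trans (hεle t₀ ht₀.1 ht₀.2 ht₀le)
    have hSne : S.Nonempty := ⟨t₀, ⟨hε1, ht₀.2⟩, ht₀le⟩
    have hSclosed : IsClosed S := by
      have : ContinuousOn Φ (Icc (min ε 1) 1) :=
        hΦcont.mono (Icc_subset_Icc (lt_min hε one_pos).le le_rfl)
      exact this.preimage_isClosed_of_isClosed isClosed_Icc isClosed_Iic
    have hSbdd : BddBelow S := ⟨min ε 1, fun x hx => hx.1.1⟩
    set T := sInf S with hT
    have hTmem : T ∈ S := hSclosed.csInf_mem hSne hSbdd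
    have hT0 : 0 < T := lt_of_lt_of_le (lt_min hε one_pos) hTmem.1.1
    have hT1 : T ≤ 1 := hTmem.1.2
    have hTpos : ∀ s ∈ Ioo (0:ℝ) T, 0 < Φ s := by
      intro s hs
      by_contra h
      push_neg at h
      have hs1 : s ≤ 1 := (hs.2.trans_le hT1).le
      have hsS : s ∈ S := ⟨⟨(min_le_left ε 1).trans (hεle s hs.1 hs1 h), hs1⟩, h⟩
      exact absurd (csInf_le hSbdd hsS) (not_le.2 hs.2)
    have hkey := lfp_key α hα Ψ Φ Φ' hΨpos hΦ0 hΦ'0 hΦd hΦdd T ⟨hT0, hT1⟩ hTpos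
    have : (0:ℝ) ≤ T * (1 - T) := mul_nonneg hT0.le (by linarith)
    linarith [hTmem.2]
  intro t ht
  exact lfp_key α hα Ψ Φ Φ' hΨpos hΦ0 hΦ'0 hΦd hΦdd t ht
    (fun s hs => hΦpos s ⟨hs.1, (hs.2.trans_le ht.2).le⟩)
end
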